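/- arXiv:2007.08316 — 8 statements merged into one kernel-verified Lean document; each statement's English description precedes it below -/
import Mathlib

section
/- Let L, τ, a, κ₁, c₀ > 0, let κ₂ ∈ ℝ \ {0} with |κ₂| < κ₁, and let 0 < α < β < γ < L. Suppose u, y : [0,L] × [0,∞) → ℂ are twice continuously differentiable, η : [0,L] × [0,1] × [0,∞) → ℂ is continuously differentiable and has continuous mixed partial derivatives η_{xρ} and η_{xt}, and suppose: (i) there is a function S(x,t), continuously differentiable in x on [0,L], such that S(x,t) = a u_x(x,t) + κ₁ u_{tx}(x,t) + κ₂ η_x(x,1,t) for x ∈ (0,β), S(x,t) = a u_x(x,t) for x ∈ (β,L), and u_{tt} − S_x + c(x) y_t = 0 on (0,L) × (0,∞); (ii) y_{tt} − y_{xx} − c(x) u_t = 0 on (0,L) × (0,∞); (iii) τ η_t(x,ρ,t) + η_ρ(x,ρ,t) = 0 on (0,L) × (0,1) × (0,∞); (iv) u(0,t) = u(L,t) = y(0,t) = y(L,t) = 0 and η(0,ρ,t) = 0 for all t > 0, ρ ∈ (0,1); (v) η(x,0,t) = u_t(x,t). Then the energy E(t) = (1/2)∫₀^L (|u_t|² +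 a|u_x|²) dx + (1/2)∫₀^L (|y_t|² + |y_x|²) dx + (τ|κ₂|/2)∫₀^β ∫₀¹ |η_x(x,ρ,t)|² dρ dx is differentiable in t and satisfies E′(t) ≤ −(κ₁ − |κ₂|) ∫₀^β |η_x(x,0,t)|² dx for every t > 0. -/
/-
Treat `ℂ` as a real inner product space, `⟪z, w⟫ = Re (conj z * w)`, so that the energy densities
are squared norms and everything below holds in any real inner product space.

Differentiating under the integral sign, `E'(t)` is a sum of integrals of `⟪u_t, u_tt⟫`,
`a ⟪u_x, u_tx⟫`, `⟪y_t, y_tt⟫`, `⟪y_x, y_tx⟫` and `τ |κ₂| ⟪η_x, η_xt⟫`. Inserting the two wave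
equations, the coupling terms `c ⟪u_t, y_t⟫` cancel pointwise, and integrating by parts in `x`
(the velocities vanish at `0` and `L`) leaves `-∫₀^β ⟪u_tx, κ₁ u_tx + κ₂ η_x(·,1)⟫`, because
`S - a u_x` vanishes on `(β, L)`. Differentiating the transport equation in `x` gives
`τ η_xt + η_xρ = 0`, so the delay term contributes `(|κ₂|/2) ∫₀^β (|η_x(·,0)|² - |η_x(·,1)|²)`,
and `η_x(·,0) = u_tx`. Young's inequality `-κ₂ ⟪v, w⟫ ≤ |κ₂| (|v|² + |w|²) / 2` absorbs the
feedback term `κ₂ ⟪u_tx, η_x(·,1)⟫`.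
-/

open MeasureTheory Complex Set Filter Topology Metric intervalIntegral
open scoped Interval
open scoped RealInnerProductSpace

section Slices

variable {α β γ X : Type*} [TopologicalSpace α] [TopologicalSpace β] [TopologicalSpace γ]
  [TopologicalSpace X] {f : α → β → γ → X} {K : Set α} {P : Set β} {T : Set γ}

theorem ContinuousOn.slice_mid
    (h : ContinuousOn (fun q : α × β × γ => f q.1 q.2.1 q.2.2) (K ×ˢ P ×ˢ T)) {ρ : β}
    (hρ : ρ ∈ P) : ContinuousOn (fun q : α × γ => f q.1 ρ q.2) (K ×ˢ T) :=
  h.comp (f := fun q : α × γ => (q.1, ρ, q.2)) (by fun_prop) fun _ hq => ⟨hq.1, hρ, hq.2⟩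

theorem ContinuousOn.slice_last
    (h : ContinuousOn (fun q : α × β × γ => f q.1 q.2.1 q.2.2) (K ×ˢ P ×ˢ T)) {t : γ}
    (ht : t ∈ T) : ContinuousOn (fun q : α × β => f q.1 q.2 t) (K ×ˢ P) :=
  h.comp (f := fun q : α × β => (q.1, q.2, t)) (by fun_prop) fun _ hq => ⟨hq.1, hq.2, ht⟩

end Slices

theorem HasDerivAt.eq_zero_of_eqOn_zero {F : Type*} [NormedAddCommGroup F] [NormedSpace ℝ F]
    {f : ℝ → F} {f' : F} {x : ℝ} {s : Set ℝ} (hf : HasDerivAt f f' x) (hs : s ∈ 𝓝 x)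
    (h : ∀ y ∈ s, f y = 0) : f' = 0 :=
  hf.unique ((hasDerivAt_const x 0).congr_of_eventuallyEq (eventually_of_mem hs h))

section ParametricIntegral

variable {G : Type*} [NormedAddCommGroup G] [NormedSpace ℝ G]

theorem continuousOn_intervalIntegral_of_continuousOn_prod {X : Type*} [TopologicalSpace X]
    {f : X → ℝ → G} {K : Set X} {c d : ℝ} (hcd : c ≤ d)
    (hf : ContinuousOn (fun q : X × ℝ => f q.1 q.2) (K ×ˢ Icc c d)) :
    ContinuousOn (fun x => ∫ ρ in c..d, f x ρ) K := by
  -- clamping `ρ` to `[c, d]` makes the integrand continuous on `K × ℝ`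
  have hproj : ∀ x, ∫ ρ in c..d, f x ρ = ∫ ρ in c..d, f x (projIcc c d hcd ρ) := fun x =>
    integral_congr fun ρ hρ => by
      rw [uIcc_of_le hcd] at hρ
      rw [projIcc_of_mem hcd hρ]
  simp_rw [hproj]
  rw [continuousOn_iff_continuous_domRestrict]
  refine continuous_parametric_intervalIntegral_of_continuous'
    (f := fun (x : K) ρ => f x (projIcc c d hcd ρ)) ?_ c d
  exact hf.comp_continuous (f := fun q : K × ℝ => ((q.1 : X), (projIcc c d hcd q.2 : ℝ)))
    (by fun_prop) fun q => ⟨q.1.2, (projIcc c d hcd q.2).2⟩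

theorem hasDerivAt_intervalIntegral_of_continuousOn {F F' : ℝ → ℝ → G} {a b t₀ : ℝ}
    {T : Set ℝ} (hab : a ≤ b) (hT : T ∈ 𝓝 t₀)
    (hF : ∀ x ∈ Icc a b, ∀ s ∈ T, HasDerivAt (F x) (F' x s) s)
    (hFc : ∀ s ∈ T, ContinuousOn (F · s) (Icc a b))
    (hF'c : ContinuousOn (fun q : ℝ × ℝ => F' q.1 q.2) (Icc a b ×ˢ T)) :
    HasDerivAt (fun s => ∫ x in a..b, F x s) (∫ x in a..b, F' x t₀) t₀ := by
  obtain ⟨δ, hδ, hball⟩ := Metric.mem_nhds_iff.1 hT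
  have hK : closedBall t₀ (δ / 2) ⊆ T :=
    (closedBall_subset_ball (half_lt_self hδ)).trans hball
  obtain ⟨M, hM⟩ := (isCompact_Icc.prod (isCompact_closedBall t₀ (δ / 2)))
    |>.exists_bound_of_continuousOn (hF'c.mono (prod_mono subset_rfl hK))
  have hIoc : Ι a b ⊆ Icc a b := by rw [uIoc_of_le hab]; exact Ioc_subset_Icc_self
  refine (hasDerivAt_integral_of_dominated_loc_of_deriv_le (bound := fun _ => M)
    (F := fun s x => F x s) (F' := fun s x => F' x s)
    (ball_mem_nhds t₀ (half_pos hδ)) ?_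
    (ContinuousOn.intervalIntegrable_of_Icc hab (hFc t₀ (mem_of_mem_nhds hT)))
    ?_ ?_ intervalIntegrable_const ?_).2
  · filter_upwards [hT] with s hs
    exact ((hFc s hs).mono hIoc).aestronglyMeasurable measurableSet_uIoc
  · exact ((hF'c.uncurry_right t₀ (mem_of_mem_nhds hT)).mono hIoc).aestronglyMeasurable
      measurableSet_uIoc
  · exact ae_of_all _ fun x hx s hs => hM (x, s) ⟨hIoc hx, ball_subset_closedBall hs⟩
  · exact ae_of_all _ fun x hx s hs => hF x (hIoc hx) s (hK (ball_subset_closedBall hs))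

theorem hasDerivAt_intervalIntegral_intervalIntegral_of_continuousOn
    {F F' : ℝ → ℝ → ℝ → G} {a b c d t₀ : ℝ} {T : Set ℝ} (hab : a ≤ b) (hcd : c ≤ d) (hT : T ∈ 𝓝 t₀)
    (hF : ∀ x ∈ Icc a b, ∀ ρ ∈ Icc c d, ∀ s ∈ T, HasDerivAt (F x ρ) (F' x ρ s) s)
    (hFc : ContinuousOn (fun q : ℝ × ℝ × ℝ => F q.1 q.2.1 q.2.2) (Icc a b ×ˢ Icc c d ×ˢ T))
    (hF'c : ContinuousOn (fun q : ℝ × ℝ × ℝ => F' q.1 q.2.1 q.2.2)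
      (Icc a b ×ˢ Icc c d ×ˢ T)) :
    HasDerivAt (fun s => ∫ x in a..b, ∫ ρ in c..d, F x ρ s)
      (∫ x in a..b, ∫ ρ in c..d, F' x ρ t₀) t₀ := by
  have hmaps : ∀ x ∈ Icc a b, MapsTo (fun q : ℝ × ℝ => (x, q.1, q.2))
      (Icc c d ×ˢ T) (Icc a b ×ˢ Icc c d ×ˢ T) := fun x hx q hq => ⟨hx, hq⟩
  refine hasDerivAt_intervalIntegral_of_continuousOn (F := fun x s => ∫ ρ in c..d, F x ρ s)
    (F' := fun x s => ∫ ρ in c..d, F' x ρ s) hab (interior_mem_nhds.2 hT)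
    (fun x hx s hs => ?_) (fun s hs => ?_) ?_
  · exact hasDerivAt_intervalIntegral_of_continuousOn hcd (mem_interior_iff_mem_nhds.1 hs)
      (hF x hx) (fun s' hs' => (hFc.comp (by fun_prop) (hmaps x hx)).uncurry_right s' hs')
      (hF'c.comp (by fun_prop) (hmaps x hx))
  · refine continuousOn_intervalIntegral_of_continuousOn_prod hcd
      (hFc.comp (f := fun q : ℝ × ℝ => (q.1, q.2, s)) (by fun_prop) ?_)
    exact fun q hq => ⟨hq.1, hq.2, interior_subset hs⟩
  · refine continuousOn_intervalIntegral_of_continuousOn_prod (X := ℝ × ℝ) hcd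
      (f := fun p ρ => F' p.1 ρ p.2)
      (hF'c.comp (f := fun q : (ℝ × ℝ) × ℝ => (q.1.1, q.2, q.1.2)) (by fun_prop) ?_)
    exact fun q hq => ⟨hq.1.1, hq.2, interior_subset hq.1.2⟩

/-- Equality of mixed partials `∂ₓ (∂ₛ g) = ∂ₛ (∂ₓ g)`, obtained by differentiating
`g x s = g a s + ∫ₐˣ ∂ₓ g ξ s dξ` under the integral sign in `s`. -/
theorem hasDerivAt_of_hasDerivAt_mixed_partial {g gx gs gxs : ℝ → ℝ → G} [CompleteSpace G]
    {a b s₀ : ℝ} {T : Set ℝ} (hT : T ∈ 𝓝 s₀)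
    (hgx : ∀ s ∈ T, ∀ x ∈ Icc a b, HasDerivAt (g · s) (gx x s) x)
    (hgs : ∀ x ∈ Icc a b, HasDerivAt (g x) (gs x s₀) s₀)
    (hgxs : ∀ x ∈ Icc a b, ∀ s ∈ T, HasDerivAt (gx x) (gxs x s) s)
    (hgxc : ContinuousOn (fun q : ℝ × ℝ => gx q.1 q.2) (Icc a b ×ˢ T))
    (hgxsc : ContinuousOn (fun q : ℝ × ℝ => gxs q.1 q.2) (Icc a b ×ˢ T))
    {x : ℝ} (hx : x ∈ Ioo a b) :
    HasDerivAt (gs · s₀) (gxs x s₀) x := by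
  have hgxsc₀ := hgxsc.uncurry_right s₀ (mem_of_mem_nhds hT)
  have hprimitive : ∀ z ∈ Icc a b, gs z s₀ = gs a s₀ + ∫ ξ in a..z, gxs ξ s₀ := by
    intro z hz
    have hsub : Icc a z ⊆ Icc a b := Icc_subset_Icc_right hz.2
    have hftc : ∀ s ∈ T, g z s = g a s + ∫ ξ in a..z, gx ξ s := fun s hs => by
      rw [integral_eq_sub_of_hasDerivAt (fun ξ hξ => hgx s hs ξ (hsub (uIcc_of_le hz.1 ▸ hξ)))
        (ContinuousOn.intervalIntegrable_of_Icc hz.1 ((hgxc.uncurry_right s hs).mono hsub))]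
      abel
    have hderiv := (hgs a (left_mem_Icc.2 (hz.1.trans hz.2))).add
      (hasDerivAt_intervalIntegral_of_continuousOn hz.1 hT
        (fun ξ hξ s hs => hgxs ξ (hsub hξ) s hs)
        (fun s hs => (hgxc.uncurry_right s hs).mono hsub)
        (hgxsc.mono (prod_mono hsub subset_rfl)))
    exact (hgs z hz).unique (hderiv.congr_of_eventuallyEq (eventually_of_mem hT hftc))
  have hIcc : Icc a b ∈ 𝓝 x := Icc_mem_nhds hx.1 hx.2
  refine HasDerivAt.congr_of_eventuallyEq ?_ (eventually_of_mem hIcc hprimitive)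
  refine (integral_hasDerivAt_right ?_ ?_ (hgxsc₀.continuousAt hIcc)).const_add _
  · exact ContinuousOn.intervalIntegrable_of_Icc hx.1.le
      (hgxsc₀.mono (Icc_subset_Icc_right hx.2.le))
  · exact (hgxsc₀.mono Ioo_subset_Icc_self).stronglyMeasurableAtFilter isOpen_Ioo x hx

theorem transport_mixed_partials_eq_zero [CompleteSpace G]
    {η ηx ηρ ηt ηxρ ηxt : ℝ → ℝ → ℝ → G} {τ L : ℝ}
    (hηx : ∀ ρ ∈ Icc (0:ℝ) 1, ∀ t ∈ Ici (0:ℝ), ∀ x ∈ Icc (0:ℝ) L,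
      HasDerivAt (fun ξ => η ξ ρ t) (ηx x ρ t) x)
    (hηρ : ∀ x ∈ Icc (0:ℝ) L, ∀ t ∈ Ici (0:ℝ), ∀ ρ ∈ Icc (0:ℝ) 1,
      HasDerivAt (fun r => η x r t) (ηρ x ρ t) ρ)
    (hηt : ∀ x ∈ Icc (0:ℝ) L, ∀ ρ ∈ Icc (0:ℝ) 1, ∀ t ∈ Ici (0:ℝ),
      HasDerivAt (fun s => η x ρ s) (ηt x ρ t) t)
    (hηxρ : ∀ x ∈ Icc (0:ℝ) L, ∀ t ∈ Ici (0:ℝ), ∀ ρ ∈ Icc (0:ℝ) 1,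
      HasDerivAt (fun r => ηx x r t) (ηxρ x ρ t) ρ)
    (hηxt : ∀ x ∈ Icc (0:ℝ) L, ∀ ρ ∈ Icc (0:ℝ) 1, ∀ t ∈ Ici (0:ℝ),
      HasDerivAt (fun s => ηx x ρ s) (ηxt x ρ t) t)
    (hηxcont : ContinuousOn (fun q : ℝ × ℝ × ℝ => ηx q.1 q.2.1 q.2.2)
      (Icc 0 L ×ˢ Icc 0 1 ×ˢ Ici 0))
    (hηxρcont : ContinuousOn (fun q : ℝ × ℝ × ℝ => ηxρ q.1 q.2.1 q.2.2)
      (Icc 0 L ×ˢ Icc 0 1 ×ˢ Ici 0))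
    (hηxtcont : ContinuousOn (fun q : ℝ × ℝ × ℝ => ηxt q.1 q.2.1 q.2.2)
      (Icc 0 L ×ˢ Icc 0 1 ×ˢ Ici 0))
    (htransport : ∀ x ∈ Ioo (0:ℝ) L, ∀ ρ ∈ Ioo (0:ℝ) 1, ∀ t ∈ Ioi (0:ℝ),
      τ • ηt x ρ t + ηρ x ρ t = 0)
    {x ρ t : ℝ} (hx : x ∈ Ioo 0 L) (hρ : ρ ∈ Ioo 0 1) (ht : 0 < t) :
    τ • ηxt x ρ t + ηxρ x ρ t = 0 := by
  have hρ' : ρ ∈ Icc (0:ℝ) 1 := Ioo_subset_Icc_self hρ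
  have hdt : HasDerivAt (ηt · ρ t) (ηxt x ρ t) x :=
    hasDerivAt_of_hasDerivAt_mixed_partial (g := fun x s => η x ρ s) (T := Ioi 0)
      (Ioi_mem_nhds ht) (fun s hs => hηx ρ hρ' s (Ioi_subset_Ici_self hs))
      (fun y hy => hηt y hy ρ hρ' t ht.le)
      (fun y hy s hs => hηxt y hy ρ hρ' s (Ioi_subset_Ici_self hs))
      ((hηxcont.slice_mid hρ').mono (prod_mono subset_rfl Ioi_subset_Ici_self))
      ((hηxtcont.slice_mid hρ').mono (prod_mono subset_rfl Ioi_subset_Ici_self)) hx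
  have hdρ : HasDerivAt (ηρ · ρ t) (ηxρ x ρ t) x :=
    hasDerivAt_of_hasDerivAt_mixed_partial (g := fun x r => η x r t)
      (gs := fun x r => ηρ x r t) (Icc_mem_nhds hρ.1 hρ.2)
      (fun r hr => hηx r hr t ht.le) (fun y hy => hηρ y hy t ht.le ρ hρ')
      (fun y hy => hηxρ y hy t ht.le) (hηxcont.slice_last ht.le) (hηxρcont.slice_last ht.le) hx
  exact ((hdt.const_smul τ).add hdρ).eq_zero_of_eqOn_zero (Ioo_mem_nhds hx.1 hx.2)
    fun y hy => htransport y hy ρ hρ t ht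

end ParametricIntegral

section InnerProduct

variable {E : Type*} [NormedAddCommGroup E] [InnerProductSpace ℝ E]

theorem integral_inner_add_inner_deriv_eq_zero {f f' g g' : ℝ → E} {a b : ℝ} (hab : a ≤ b)
    (hf : ∀ x ∈ Icc a b, HasDerivAt f (f' x) x) (hg : ∀ x ∈ Icc a b, HasDerivAt g (g' x) x)
    (hf' : ContinuousOn f' (Icc a b)) (hg' : ContinuousOn g' (Icc a b))
    (ha : f a = 0) (hb : f b = 0) :
    ∫ x in a..b, (⟪f x, g' x⟫ + ⟪f' x, g x⟫) = 0 := by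
  have hfc : ContinuousOn f (Icc a b) := fun x hx => (hf x hx).continuousAt.continuousWithinAt
  have hgc : ContinuousOn g (Icc a b) := fun x hx => (hg x hx).continuousAt.continuousWithinAt
  rw [integral_eq_sub_of_hasDerivAt (f := fun x => ⟪f x, g x⟫)
    (fun x hx => (hf x (uIcc_of_le hab ▸ hx)).inner ℝ (hg x (uIcc_of_le hab ▸ hx)))
    (ContinuousOn.intervalIntegrable_of_Icc hab ((hfc.inner hg').add (hf'.inner hgc)))]
  simp [ha, hb]

theorem integral_two_mul_inner_of_transport {w wρ wt : ℝ → E} {a b τ : ℝ} (hab : a ≤ b)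
    (hτ : τ ≠ 0) (hw : ∀ ρ ∈ Icc a b, HasDerivAt w (wρ ρ) ρ) (hwρ : ContinuousOn wρ (Icc a b))
    (htransport : ∀ ρ ∈ Ioo a b, τ • wt ρ + wρ ρ = 0) :
    ∫ ρ in a..b, 2 * ⟪w ρ, wt ρ⟫ = (‖w a‖ ^ 2 - ‖w b‖ ^ 2) / τ := by
  have hwc : ContinuousOn w (Icc a b) := fun x hx => (hw x hx).continuousAt.continuousWithinAt
  have hwt : ∀ ρ ∈ Ioo a b, wt ρ = -τ⁻¹ • wρ ρ := fun ρ hρ => by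
    rw [neg_smul, eq_neg_iff_add_eq_zero, ← smul_eq_zero_iff_right hτ, smul_add,
      smul_inv_smul₀ hτ, htransport ρ hρ]
  have hcongr : ∫ ρ in a..b, 2 * ⟪w ρ, wt ρ⟫ = ∫ ρ in a..b, -τ⁻¹ * (2 * ⟪w ρ, wρ ρ⟫) :=
    integral_congr_Ioo_of_le hab fun ρ hρ => by
      simp only [hwt ρ hρ, real_inner_smul_right]
      ring
  rw [hcongr, intervalIntegral.integral_const_mul,
    integral_eq_sub_of_hasDerivAt (fun ρ hρ => (hw ρ (uIcc_of_le hab ▸ hρ)).norm_sq)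
      (ContinuousOn.intervalIntegrable_of_Icc hab (continuousOn_const.mul (hwc.inner hwρ)))]
  field_simp
  ring

theorem neg_mul_inner_le (k : ℝ) (v w : E) :
    -(k * ⟪v, w⟫) ≤ |k| / 2 * (‖v‖ ^ 2 + ‖w‖ ^ 2) := by
  have h₁ : -(k * ⟪v, w⟫) ≤ |k| * (‖v‖ * ‖w‖) := by
    rw [← neg_mul]
    calc -k * ⟪v, w⟫ ≤ |-k * ⟪v, w⟫| := le_abs_self _
      _ = |k| * |⟪v, w⟫| := by rw [abs_mul, abs_neg]
      _ ≤ |k| * (‖v‖ * ‖w‖) := by gcongr; exact abs_real_inner_le_norm v w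
  nlinarith [abs_nonneg k, sq_nonneg (‖v‖ - ‖w‖)]

theorem hasDerivAt_half_integral_norm_sq_add_mul_norm_sq {f f' g g' : ℝ → ℝ → E}
    {a b k t : ℝ} {T : Set ℝ} (hab : a ≤ b) (hT : T ∈ 𝓝 t)
    (hf : ∀ x ∈ Icc a b, ∀ s ∈ T, HasDerivAt (f x) (f' x s) s)
    (hg : ∀ x ∈ Icc a b, ∀ s ∈ T, HasDerivAt (g x) (g' x s) s)
    (hfc : ContinuousOn (fun q : ℝ × ℝ => f q.1 q.2) (Icc a b ×ˢ T))
    (hgc : ContinuousOn (fun q : ℝ × ℝ => g q.1 q.2) (Icc a b ×ˢ T))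
    (hf'c : ContinuousOn (fun q : ℝ × ℝ => f' q.1 q.2) (Icc a b ×ˢ T))
    (hg'c : ContinuousOn (fun q : ℝ × ℝ => g' q.1 q.2) (Icc a b ×ˢ T)) :
    HasDerivAt (fun s => 1 / 2 * ∫ x in a..b, (‖f x s‖ ^ 2 + k * ‖g x s‖ ^ 2))
      (∫ x in a..b, (⟪f x t, f' x t⟫ + k * ⟪g x t, g' x t⟫)) t := by
  have hderiv := hasDerivAt_intervalIntegral_of_continuousOn
    (F' := fun x s => 2 * (⟪f x s, f' x s⟫ + k * ⟪g x s, g' x s⟫)) hab hT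
    (fun x hx s hs => ((hf x hx s hs).norm_sq.add ((hg x hx s hs).norm_sq.const_mul k)).congr_deriv
      (by ring))
    (fun s hs => ((hfc.uncurry_right s hs).norm.pow 2).add
      (continuousOn_const.mul ((hgc.uncurry_right s hs).norm.pow 2)))
    (continuousOn_const.mul ((hfc.inner hf'c).add (continuousOn_const.mul (hgc.inner hg'c))))
  refine (hderiv.const_mul (1 / 2)).congr_deriv ?_
  rw [intervalIntegral.integral_const_mul]
  ring

/-- In the application `v = u_t`, `w = u_x`, `A = u_tt`, `p = y_t`, `q = y_x`, `B = y_tt` and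
`z = η_x(·, 1)` at a fixed time; a suffix `x` denotes the `x`-derivative. -/
theorem wave_energy_rate_eq {v vx w A S Sx p px q qx B z : ℝ → E} {c : ℝ → ℝ}
    {a κ₁ κ₂ β L : ℝ} (hβ : 0 ≤ β) (hβL : β ≤ L)
    (hv : ∀ x ∈ Icc 0 L, HasDerivAt v (vx x) x) (hS : ∀ x ∈ Icc 0 L, HasDerivAt S (Sx x) x)
    (hp : ∀ x ∈ Icc 0 L, HasDerivAt p (px x) x) (hq : ∀ x ∈ Icc 0 L, HasDerivAt q (qx x) x)
    (hvx : ContinuousOn vx (Icc 0 L)) (hSx : ContinuousOn Sx (Icc 0 L))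
    (hpx : ContinuousOn px (Icc 0 L)) (hqx : ContinuousOn qx (Icc 0 L))
    (hw : ContinuousOn w (Icc 0 L)) (hA : ContinuousOn A (Icc 0 L))
    (hB : ContinuousOn B (Icc 0 L))
    (hv0 : v 0 = 0) (hvL : v L = 0) (hp0 : p 0 = 0) (hpL : p L = 0)
    (hA_eq : ∀ x ∈ Ioo 0 L, A x = Sx x - c x • p x)
    (hB_eq : ∀ x ∈ Ioo 0 L, B x = qx x + c x • v x)
    (hS_lt : ∀ x ∈ Ioo 0 β, S x = a • w x + κ₁ • vx x + κ₂ • z x)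
    (hS_gt : ∀ x ∈ Ioo β L, S x = a • w x) :
    (∫ x in 0..L, (⟪v x, A x⟫ + a * ⟪w x, vx x⟫)) + ∫ x in 0..L, (⟪p x, B x⟫ + ⟪q x, px x⟫)
      = -∫ x in 0..β, (κ₁ * ‖vx x‖ ^ 2 + κ₂ * ⟪vx x, z x⟫) := by
  have hL : (0:ℝ) ≤ L := hβ.trans hβL
  have hI : ∀ {f : ℝ → ℝ}, ContinuousOn f (Icc 0 L) → IntervalIntegrable f volume 0 L :=
    ContinuousOn.intervalIntegrable_of_Icc hL
  have hc : ∀ {f f' : ℝ → E}, (∀ x ∈ Icc 0 L, HasDerivAt f (f' x) x) →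
      ContinuousOn f (Icc 0 L) := fun hf x hx => (hf x hx).continuousAt.continuousWithinAt
  have hvc := hc hv
  have hSc := hc hS
  have hpc := hc hp
  have hqc := hc hq
  have hstress : ContinuousOn (fun x => ⟪vx x, S x - a • w x⟫) (Icc 0 L) := by fun_prop
  have hsplit : ∫ x in 0..L, ⟪vx x, S x - a • w x⟫
      = ∫ x in 0..β, (κ₁ * ‖vx x‖ ^ 2 + κ₂ * ⟪vx x, z x⟫) := by
    rw [← integral_add_adjacent_intervals
        (ContinuousOn.intervalIntegrable_of_Icc hβ (hstress.mono (Icc_subset_Icc_right hβL)))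
        (ContinuousOn.intervalIntegrable_of_Icc hβL (hstress.mono (Icc_subset_Icc_left hβ))),
      integral_congr_Ioo_of_le hβL (g := fun _ => 0) fun x hx => by simp [hS_gt x hx],
      intervalIntegral.integral_zero, add_zero]
    refine integral_congr_Ioo_of_le hβ fun x hx => ?_
    rw [hS_lt x hx, add_assoc, add_sub_cancel_left, inner_add_right, real_inner_smul_right,
      real_inner_smul_right, real_inner_self_eq_norm_sq]
  have hcongr : ∫ x in 0..L, (⟪v x, A x⟫ + a * ⟪w x, vx x⟫ + (⟪p x, B x⟫ + ⟪q x, px x⟫))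
      = ∫ x in 0..L, ((⟪v x, Sx x⟫ + ⟪vx x, S x⟫) + (⟪p x, qx x⟫ + ⟪px x, q x⟫)
          - ⟪vx x, S x - a • w x⟫) :=
    integral_congr_Ioo_of_le hL fun x hx => by
      simp only [hA_eq x hx, hB_eq x hx, inner_sub_right, inner_add_right, real_inner_smul_right]
      rw [real_inner_comm (v x) (p x), real_inner_comm (q x) (px x), real_inner_comm (w x) (vx x)]
      ring
  have hEu : IntervalIntegrable (fun x => ⟪v x, A x⟫ + a * ⟪w x, vx x⟫) volume 0 L :=
    hI (by fun_prop)
  have hEy : IntervalIntegrable (fun x => ⟪p x, B x⟫ + ⟪q x, px x⟫) volume 0 L := hI (by fun_prop)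
  have hIu : IntervalIntegrable (fun x => ⟪v x, Sx x⟫ + ⟪vx x, S x⟫) volume 0 L :=
    hI (by fun_prop)
  have hIy : IntervalIntegrable (fun x => ⟪p x, qx x⟫ + ⟪px x, q x⟫) volume 0 L :=
    hI (by fun_prop)
  rw [← intervalIntegral.integral_add hEu hEy, hcongr,
    intervalIntegral.integral_sub (hIu.add hIy) (hI hstress),
    intervalIntegral.integral_add hIu hIy,
    integral_inner_add_inner_deriv_eq_zero hL hv hS hvx hSx hv0 hvL,
    integral_inner_add_inner_deriv_eq_zero hL hp hq hpx hqx hp0 hpL, hsplit]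
  ring

theorem delay_dissipation_le {v z : ℝ → E} {a b τ κ₁ κ₂ : ℝ} (hab : a ≤ b) (hτ : τ ≠ 0)
    (hv : ContinuousOn v (Icc a b)) (hz : ContinuousOn z (Icc a b)) :
    -(∫ x in a..b, (κ₁ * ‖v x‖ ^ 2 + κ₂ * ⟪v x, z x⟫))
        + τ * |κ₂| / 2 * ∫ x in a..b, (‖v x‖ ^ 2 - ‖z x‖ ^ 2) / τ
      ≤ -(κ₁ - |κ₂|) * ∫ x in a..b, ‖v x‖ ^ 2 := by
  have hI : ∀ {f : ℝ → ℝ}, ContinuousOn f (Icc a b) → IntervalIntegrable f volume a b :=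
    ContinuousOn.intervalIntegrable_of_Icc hab
  have hyoung : ∀ x, -(κ₁ * ‖v x‖ ^ 2 + κ₂ * ⟪v x, z x⟫)
      + τ * |κ₂| / 2 * ((‖v x‖ ^ 2 - ‖z x‖ ^ 2) / τ) ≤ -(κ₁ - |κ₂|) * ‖v x‖ ^ 2 := fun x => by
    have hτ' : τ * |κ₂| / 2 * ((‖v x‖ ^ 2 - ‖z x‖ ^ 2) / τ)
        = |κ₂| / 2 * (‖v x‖ ^ 2 - ‖z x‖ ^ 2) := by
      field_simp
    linarith [neg_mul_inner_le κ₂ (v x) (z x)]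
  have h₁ : IntervalIntegrable (fun x => -(κ₁ * ‖v x‖ ^ 2 + κ₂ * ⟪v x, z x⟫)) volume a b :=
    hI (by fun_prop)
  have h₂ : IntervalIntegrable (fun x => τ * |κ₂| / 2 * ((‖v x‖ ^ 2 - ‖z x‖ ^ 2) / τ)) volume a b :=
    hI (by fun_prop)
  calc -(∫ x in a..b, (κ₁ * ‖v x‖ ^ 2 + κ₂ * ⟪v x, z x⟫))
        + τ * |κ₂| / 2 * ∫ x in a..b, (‖v x‖ ^ 2 - ‖z x‖ ^ 2) / τ
      = ∫ x in a..b, (-(κ₁ * ‖v x‖ ^ 2 + κ₂ * ⟪v x, z x⟫)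
          + τ * |κ₂| / 2 * ((‖v x‖ ^ 2 - ‖z x‖ ^ 2) / τ)) := by
        rw [intervalIntegral.integral_add h₁ h₂,
          intervalIntegral.integral_neg, intervalIntegral.integral_const_mul]
    _ ≤ ∫ x in a..b, -(κ₁ - |κ₂|) * ‖v x‖ ^ 2 :=
        intervalIntegral.integral_mono_on hab (h₁.add h₂) (hI (by fun_prop))
          fun x _ => hyoung x
    _ = -(κ₁ - |κ₂|) * ∫ x in a..b, ‖v x‖ ^ 2 := intervalIntegral.integral_const_mul _ _

end InnerProduct

theorem stmt_0_general (L τ a κ₁ κ₂ α β γ : ℝ)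
    (hτ : 0 < τ)
    (hα : 0 < α) (hαβ : α < β) (hβγ : β < γ) (hγL : γ < L)
    (c : ℝ → ℝ)
    (u ut utt ux utx : ℝ → ℝ → ℂ)
    (y yt ytt yx yxx ytx : ℝ → ℝ → ℂ)
    (η ηx ηρ ηt ηxρ ηxt : ℝ → ℝ → ℝ → ℂ)
    (S Sx : ℝ → ℝ → ℂ)
    -- u is twice continuously differentiable on [0,L] × [0,∞)
    (hut : ∀ x ∈ Set.Icc (0:ℝ) L, ∀ t ∈ Set.Ici (0:ℝ),
      HasDerivAt (fun s => u x s) (ut x t) t)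
    (hutt : ∀ x ∈ Set.Icc (0:ℝ) L, ∀ t ∈ Set.Ici (0:ℝ),
      HasDerivAt (fun s => ut x s) (utt x t) t)
    (hutx : ∀ t ∈ Set.Ici (0:ℝ), ∀ x ∈ Set.Icc (0:ℝ) L,
      HasDerivAt (fun ξ => ut ξ t) (utx x t) x)
    (huxt : ∀ x ∈ Set.Icc (0:ℝ) L, ∀ t ∈ Set.Ici (0:ℝ),
      HasDerivAt (fun s => ux x s) (utx x t) t)
    (hutcont : ContinuousOn (fun q : ℝ × ℝ => ut q.1 q.2) (Set.Icc 0 L ×ˢ Set.Ici 0))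
    (huttcont : ContinuousOn (fun q : ℝ × ℝ => utt q.1 q.2) (Set.Icc 0 L ×ˢ Set.Ici 0))
    (huxcont : ContinuousOn (fun q : ℝ × ℝ => ux q.1 q.2) (Set.Icc 0 L ×ˢ Set.Ici 0))
    (hutxcont : ContinuousOn (fun q : ℝ × ℝ => utx q.1 q.2) (Set.Icc 0 L ×ˢ Set.Ici 0))
    -- y is twice continuously differentiable on [0,L] × [0,∞)
    (hyt : ∀ x ∈ Set.Icc (0:ℝ) L, ∀ t ∈ Set.Ici (0:ℝ),
      HasDerivAt (fun s => y x s) (yt x t) t)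
    (hytt : ∀ x ∈ Set.Icc (0:ℝ) L, ∀ t ∈ Set.Ici (0:ℝ),
      HasDerivAt (fun s => yt x s) (ytt x t) t)
    (hyxx : ∀ t ∈ Set.Ici (0:ℝ), ∀ x ∈ Set.Icc (0:ℝ) L,
      HasDerivAt (fun ξ => yx ξ t) (yxx x t) x)
    (hytx : ∀ t ∈ Set.Ici (0:ℝ), ∀ x ∈ Set.Icc (0:ℝ) L,
      HasDerivAt (fun ξ => yt ξ t) (ytx x t) x)
    (hyxt : ∀ x ∈ Set.Icc (0:ℝ) L, ∀ t ∈ Set.Ici (0:ℝ),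
      HasDerivAt (fun s => yx x s) (ytx x t) t)
    (hytcont : ContinuousOn (fun q : ℝ × ℝ => yt q.1 q.2) (Set.Icc 0 L ×ˢ Set.Ici 0))
    (hyttcont : ContinuousOn (fun q : ℝ × ℝ => ytt q.1 q.2) (Set.Icc 0 L ×ˢ Set.Ici 0))
    (hyxcont : ContinuousOn (fun q : ℝ × ℝ => yx q.1 q.2) (Set.Icc 0 L ×ˢ Set.Ici 0))
    (hyxxcont : ContinuousOn (fun q : ℝ × ℝ => yxx q.1 q.2) (Set.Icc 0 L ×ˢ Set.Ici 0))
    (hytxcont : ContinuousOn (fun q : ℝ × ℝ => ytx q.1 q.2) (Set.Icc 0 L ×ˢ Set.Ici 0))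
    -- η is continuously differentiable with continuous mixed partials η_{xρ}, η_{xt}
    (hηx : ∀ ρ ∈ Set.Icc (0:ℝ) 1, ∀ t ∈ Set.Ici (0:ℝ), ∀ x ∈ Set.Icc (0:ℝ) L,
      HasDerivAt (fun ξ => η ξ ρ t) (ηx x ρ t) x)
    (hηρ : ∀ x ∈ Set.Icc (0:ℝ) L, ∀ t ∈ Set.Ici (0:ℝ), ∀ ρ ∈ Set.Icc (0:ℝ) 1,
      HasDerivAt (fun r => η x r t) (ηρ x ρ t) ρ)
    (hηt : ∀ x ∈ Set.Icc (0:ℝ) L, ∀ ρ ∈ Set.Icc (0:ℝ) 1, ∀ t ∈ Set.Ici (0:ℝ),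
      HasDerivAt (fun s => η x ρ s) (ηt x ρ t) t)
    (hηxρ : ∀ x ∈ Set.Icc (0:ℝ) L, ∀ t ∈ Set.Ici (0:ℝ), ∀ ρ ∈ Set.Icc (0:ℝ) 1,
      HasDerivAt (fun r => ηx x r t) (ηxρ x ρ t) ρ)
    (hηxt : ∀ x ∈ Set.Icc (0:ℝ) L, ∀ ρ ∈ Set.Icc (0:ℝ) 1, ∀ t ∈ Set.Ici (0:ℝ),
      HasDerivAt (fun s => ηx x ρ s) (ηxt x ρ t) t)
    (hηxcont : ContinuousOn (fun q : ℝ × ℝ × ℝ => ηx q.1 q.2.1 q.2.2)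
      (Set.Icc 0 L ×ˢ Set.Icc 0 1 ×ˢ Set.Ici 0))
    (hηxρcont : ContinuousOn (fun q : ℝ × ℝ × ℝ => ηxρ q.1 q.2.1 q.2.2)
      (Set.Icc 0 L ×ˢ Set.Icc 0 1 ×ˢ Set.Ici 0))
    (hηxtcont : ContinuousOn (fun q : ℝ × ℝ × ℝ => ηxt q.1 q.2.1 q.2.2)
      (Set.Icc 0 L ×ˢ Set.Icc 0 1 ×ˢ Set.Ici 0))
    -- (i) the stress S and the first equation
    (hSdef1 : ∀ t ∈ Set.Ioi (0:ℝ), ∀ x ∈ Set.Ioo (0:ℝ) β,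
      S x t = (a : ℂ) * ux x t + (κ₁ : ℂ) * utx x t + (κ₂ : ℂ) * ηx x 1 t)
    (hSdef2 : ∀ t ∈ Set.Ioi (0:ℝ), ∀ x ∈ Set.Ioo β L, S x t = (a : ℂ) * ux x t)
    (hSx : ∀ t ∈ Set.Ioi (0:ℝ), ∀ x ∈ Set.Icc (0:ℝ) L,
      HasDerivAt (fun ξ => S ξ t) (Sx x t) x)
    (hSxcont : ∀ t ∈ Set.Ioi (0:ℝ), ContinuousOn (fun x => Sx x t) (Set.Icc 0 L))
    (heq1 : ∀ x ∈ Set.Ioo (0:ℝ) L, ∀ t ∈ Set.Ioi (0:ℝ),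
      utt x t - Sx x t + (c x : ℂ) * yt x t = 0)
    -- (ii) the second wave equation
    (heq2 : ∀ x ∈ Set.Ioo (0:ℝ) L, ∀ t ∈ Set.Ioi (0:ℝ),
      ytt x t - yxx x t - (c x : ℂ) * ut x t = 0)
    -- (iii) the transport equation
    (heq3 : ∀ x ∈ Set.Ioo (0:ℝ) L, ∀ ρ ∈ Set.Ioo (0:ℝ) 1, ∀ t ∈ Set.Ioi (0:ℝ),
      (τ : ℂ) * ηt x ρ t + ηρ x ρ t = 0)
    -- (iv) boundary conditions
    (hbc : ∀ t ∈ Set.Ioi (0:ℝ), u 0 t = 0 ∧ u L t = 0 ∧ y 0 t = 0 ∧ y L t = 0)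
    -- (v) compatibility condition
    (hη0 : ∀ x ∈ Set.Icc (0:ℝ) L, ∀ t ∈ Set.Ici (0:ℝ), η x 0 t = ut x t) :
    ∀ t ∈ Set.Ioi (0:ℝ), ∃ d : ℝ,
      HasDerivAt (fun s =>
          (1 / 2) * (∫ x in (0:ℝ)..L, (‖ut x s‖ ^ 2 + a * ‖ux x s‖ ^ 2))
          + (1 / 2) * (∫ x in (0:ℝ)..L, (‖yt x s‖ ^ 2 + ‖yx x s‖ ^ 2))
          + (τ * |κ₂| / 2) * (∫ x in (0:ℝ)..β, ∫ ρ in (0:ℝ)..1, ‖ηx x ρ s‖ ^ 2)) d t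
      ∧ d ≤ -(κ₁ - |κ₂|) * ∫ x in (0:ℝ)..β, ‖ηx x 0 t‖ ^ 2 := by
  intro t ht
  have ht' : t ∈ Ici (0:ℝ) := Ioi_subset_Ici_self ht
  have hT : Ioi (0:ℝ) ∈ 𝓝 t := Ioi_mem_nhds ht
  have hβ : 0 ≤ β := (hα.trans hαβ).le
  have hβL : β ≤ L := (hβγ.trans hγL).le
  have hL : (0:ℝ) ≤ L := hβ.trans hβL
  have hK : Icc 0 L ×ˢ Ioi (0:ℝ) ⊆ Icc 0 L ×ˢ Ici 0 := prod_mono subset_rfl Ioi_subset_Ici_self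
  have hK₃ : Icc 0 β ×ˢ Icc (0:ℝ) 1 ×ˢ Ioi (0:ℝ) ⊆ Icc 0 L ×ˢ Icc 0 1 ×ˢ Ici 0 :=
    prod_mono (Icc_subset_Icc_right hβL) (prod_mono subset_rfl Ioi_subset_Ici_self)
  have hu_energy := hasDerivAt_half_integral_norm_sq_add_mul_norm_sq (k := a) hL hT
    (fun x hx s hs => hutt x hx s (Ioi_subset_Ici_self hs))
    (fun x hx s hs => huxt x hx s (Ioi_subset_Ici_self hs))
    (hutcont.mono hK) (huxcont.mono hK) (huttcont.mono hK) (hutxcont.mono hK)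
  have hy_energy := hasDerivAt_half_integral_norm_sq_add_mul_norm_sq (k := 1) hL hT
    (fun x hx s hs => hytt x hx s (Ioi_subset_Ici_self hs))
    (fun x hx s hs => hyxt x hx s (Ioi_subset_Ici_self hs))
    (hytcont.mono hK) (hyxcont.mono hK) (hyttcont.mono hK) (hytxcont.mono hK)
  simp only [one_mul] at hy_energy
  have hη_energy := hasDerivAt_intervalIntegral_intervalIntegral_of_continuousOn
    (F := fun x ρ s => ‖ηx x ρ s‖ ^ 2) (F' := fun x ρ s => 2 * ⟪ηx x ρ s, ηxt x ρ s⟫)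
    hβ zero_le_one hT
    (fun x hx ρ hρ s hs =>
      (hηxt x (Icc_subset_Icc_right hβL hx) ρ hρ s (Ioi_subset_Ici_self hs)).norm_sq)
    ((hηxcont.mono hK₃).norm.pow 2)
    (continuousOn_const.mul ((hηxcont.mono hK₃).inner (hηxtcont.mono hK₃)))
  refine ⟨_, (hu_energy.add hy_energy).add (hη_energy.const_mul (τ * |κ₂| / 2)), ?_⟩
  have hwave := wave_energy_rate_eq (c := c) (z := fun x => ηx x 1 t) hβ hβL
    (hutx t ht') (hSx t ht) (hytx t ht') (hyxx t ht') (hutxcont.uncurry_right t ht')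
    (hSxcont t ht) (hytxcont.uncurry_right t ht') (hyxxcont.uncurry_right t ht')
    (huxcont.uncurry_right t ht') (huttcont.uncurry_right t ht') (hyttcont.uncurry_right t ht')
    ((hut 0 (left_mem_Icc.2 hL) t ht').eq_zero_of_eqOn_zero hT fun s hs => (hbc s hs).1)
    ((hut L (right_mem_Icc.2 hL) t ht').eq_zero_of_eqOn_zero hT fun s hs => (hbc s hs).2.1)
    ((hyt 0 (left_mem_Icc.2 hL) t ht').eq_zero_of_eqOn_zero hT fun s hs => (hbc s hs).2.2.1)
    ((hyt L (right_mem_Icc.2 hL) t ht').eq_zero_of_eqOn_zero hT fun s hs => (hbc s hs).2.2.2)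
    (fun x hx => by rw [Complex.real_smul]; linear_combination heq1 x hx t ht)
    (fun x hx => by rw [Complex.real_smul]; linear_combination heq2 x hx t ht)
    (fun x hx => by simp only [Complex.real_smul]; exact hSdef1 t ht x hx)
    (fun x hx => by rw [Complex.real_smul]; exact hSdef2 t ht x hx)
  have hηx0 : ∀ x ∈ Ioo 0 L, ηx x 0 t = utx x t := fun x hx =>
    (hηx 0 (left_mem_Icc.2 zero_le_one) t ht' x (Ioo_subset_Icc_self hx)).unique
      ((hutx t ht' x (Ioo_subset_Icc_self hx)).congr_of_eventuallyEq
        (eventually_of_mem (Icc_mem_nhds hx.1 hx.2) fun y hy => hη0 y hy t ht'))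
  have hdelay : ∫ x in 0..β, ∫ ρ in 0..1, 2 * ⟪ηx x ρ t, ηxt x ρ t⟫
      = ∫ x in 0..β, (‖utx x t‖ ^ 2 - ‖ηx x 1 t‖ ^ 2) / τ :=
    integral_congr_Ioo_of_le hβ fun x hx => by
      have hxL : x ∈ Ioo 0 L := ⟨hx.1, hx.2.trans_le hβL⟩
      rw [integral_two_mul_inner_of_transport zero_le_one hτ.ne'
        (hηxρ x (Ioo_subset_Icc_self hxL) t ht')
        ((hηxρcont.slice_last ht').uncurry_left (f := fun x r => ηxρ x r t) x
          (Ioo_subset_Icc_self hxL))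
        fun ρ hρ => transport_mixed_partials_eq_zero hηx hηρ hηt hηxρ hηxt hηxcont hηxρcont
          hηxtcont (fun x hx ρ hρ t ht => by rw [Complex.real_smul]; exact heq3 x hx ρ hρ t ht)
          hxL hρ ht, hηx0 x hxL]
  have hdamping : ∫ x in 0..β, ‖ηx x 0 t‖ ^ 2 = ∫ x in 0..β, ‖utx x t‖ ^ 2 :=
    integral_congr_Ioo_of_le hβ fun x hx => by rw [hηx0 x ⟨hx.1, hx.2.trans_le hβL⟩]
  rw [hwave, hdelay, hdamping]
  exact delay_dissipation_le hβ hτ.ne'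
    ((hutxcont.uncurry_right t ht').mono (Icc_subset_Icc_right hβL))
    (((hηxcont.slice_mid (right_mem_Icc.2 zero_le_one)).uncurry_right t ht').mono
      (Icc_subset_Icc_right hβL))

/-- Energy dissipation law (Lemma 2.1) for the coupled wave system with localized
Kelvin–Voigt damping and time delay: the energy
`E(t) = ½∫₀^L(|u_t|² + a|u_x|²) + ½∫₀^L(|y_t|² + |y_x|²) + (τ|κ₂|/2)∫₀^β∫₀¹|η_x|²`
is differentiable for `t > 0` and
`E′(t) ≤ −(κ₁ − |κ₂|)∫₀^β |η_x(x,0,t)|² dx`.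
Functions take the space variable first; subscripted functions are the corresponding
partial derivatives, supplied as data together with `HasDerivAt` and continuity
hypotheses expressing that `u, y` are `C²` and `η` is `C¹` with continuous mixed
partials `η_{xρ}, η_{xt}` on the space-time domain. -/
theorem stmt_0 (L τ a κ₁ κ₂ c₀ α β γ : ℝ)
    (hL : 0 < L) (hτ : 0 < τ) (ha : 0 < a) (hκ₁ : 0 < κ₁) (hc₀ : 0 < c₀)
    (hκ₂ : κ₂ ≠ 0) (hκ : |κ₂| < κ₁)
    (hα : 0 < α) (hαβ : α < β) (hβγ : β < γ) (hγL : γ < L)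
    (c : ℝ → ℝ) (hc : ∀ x, c x = if α < x ∧ x < γ then c₀ else 0)
    (u ut utt ux utx : ℝ → ℝ → ℂ)
    (y yt ytt yx yxx ytx : ℝ → ℝ → ℂ)
    (η ηx ηρ ηt ηxρ ηxt : ℝ → ℝ → ℝ → ℂ)
    (S Sx : ℝ → ℝ → ℂ)
    -- u is twice continuously differentiable on [0,L] × [0,∞)
    (hut : ∀ x ∈ Set.Icc (0:ℝ) L, ∀ t ∈ Set.Ici (0:ℝ),
      HasDerivAt (fun s => u x s) (ut x t) t)
    (hutt : ∀ x ∈ Set.Icc (0:ℝ) L, ∀ t ∈ Set.Ici (0:ℝ),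
      HasDerivAt (fun s => ut x s) (utt x t) t)
    (hux : ∀ t ∈ Set.Ici (0:ℝ), ∀ x ∈ Set.Icc (0:ℝ) L,
      HasDerivAt (fun ξ => u ξ t) (ux x t) x)
    (hutx : ∀ t ∈ Set.Ici (0:ℝ), ∀ x ∈ Set.Icc (0:ℝ) L,
      HasDerivAt (fun ξ => ut ξ t) (utx x t) x)
    (huxt : ∀ x ∈ Set.Icc (0:ℝ) L, ∀ t ∈ Set.Ici (0:ℝ),
      HasDerivAt (fun s => ux x s) (utx x t) t)
    (hucont : ContinuousOn (fun q : ℝ × ℝ => u q.1 q.2) (Set.Icc 0 L ×ˢ Set.Ici 0))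
    (hutcont : ContinuousOn (fun q : ℝ × ℝ => ut q.1 q.2) (Set.Icc 0 L ×ˢ Set.Ici 0))
    (huttcont : ContinuousOn (fun q : ℝ × ℝ => utt q.1 q.2) (Set.Icc 0 L ×ˢ Set.Ici 0))
    (huxcont : ContinuousOn (fun q : ℝ × ℝ => ux q.1 q.2) (Set.Icc 0 L ×ˢ Set.Ici 0))
    (hutxcont : ContinuousOn (fun q : ℝ × ℝ => utx q.1 q.2) (Set.Icc 0 L ×ˢ Set.Ici 0))
    -- y is twice continuously differentiable on [0,L] × [0,∞)
    (hyt : ∀ x ∈ Set.Icc (0:ℝ) L, ∀ t ∈ Set.Ici (0:ℝ),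
      HasDerivAt (fun s => y x s) (yt x t) t)
    (hytt : ∀ x ∈ Set.Icc (0:ℝ) L, ∀ t ∈ Set.Ici (0:ℝ),
      HasDerivAt (fun s => yt x s) (ytt x t) t)
    (hyx : ∀ t ∈ Set.Ici (0:ℝ), ∀ x ∈ Set.Icc (0:ℝ) L,
      HasDerivAt (fun ξ => y ξ t) (yx x t) x)
    (hyxx : ∀ t ∈ Set.Ici (0:ℝ), ∀ x ∈ Set.Icc (0:ℝ) L,
      HasDerivAt (fun ξ => yx ξ t) (yxx x t) x)
    (hytx : ∀ t ∈ Set.Ici (0:ℝ), ∀ x ∈ Set.Icc (0:ℝ) L,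
      HasDerivAt (fun ξ => yt ξ t) (ytx x t) x)
    (hyxt : ∀ x ∈ Set.Icc (0:ℝ) L, ∀ t ∈ Set.Ici (0:ℝ),
      HasDerivAt (fun s => yx x s) (ytx x t) t)
    (hycont : ContinuousOn (fun q : ℝ × ℝ => y q.1 q.2) (Set.Icc 0 L ×ˢ Set.Ici 0))
    (hytcont : ContinuousOn (fun q : ℝ × ℝ => yt q.1 q.2) (Set.Icc 0 L ×ˢ Set.Ici 0))
    (hyttcont : ContinuousOn (fun q : ℝ × ℝ => ytt q.1 q.2) (Set.Icc 0 L ×ˢ Set.Ici 0))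
    (hyxcont : ContinuousOn (fun q : ℝ × ℝ => yx q.1 q.2) (Set.Icc 0 L ×ˢ Set.Ici 0))
    (hyxxcont : ContinuousOn (fun q : ℝ × ℝ => yxx q.1 q.2) (Set.Icc 0 L ×ˢ Set.Ici 0))
    (hytxcont : ContinuousOn (fun q : ℝ × ℝ => ytx q.1 q.2) (Set.Icc 0 L ×ˢ Set.Ici 0))
    -- η is continuously differentiable with continuous mixed partials η_{xρ}, η_{xt}
    (hηx : ∀ ρ ∈ Set.Icc (0:ℝ) 1, ∀ t ∈ Set.Ici (0:ℝ), ∀ x ∈ Set.Icc (0:ℝ) L,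
      HasDerivAt (fun ξ => η ξ ρ t) (ηx x ρ t) x)
    (hηρ : ∀ x ∈ Set.Icc (0:ℝ) L, ∀ t ∈ Set.Ici (0:ℝ), ∀ ρ ∈ Set.Icc (0:ℝ) 1,
      HasDerivAt (fun r => η x r t) (ηρ x ρ t) ρ)
    (hηt : ∀ x ∈ Set.Icc (0:ℝ) L, ∀ ρ ∈ Set.Icc (0:ℝ) 1, ∀ t ∈ Set.Ici (0:ℝ),
      HasDerivAt (fun s => η x ρ s) (ηt x ρ t) t)
    (hηxρ : ∀ x ∈ Set.Icc (0:ℝ) L, ∀ t ∈ Set.Ici (0:ℝ), ∀ ρ ∈ Set.Icc (0:ℝ) 1,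
      HasDerivAt (fun r => ηx x r t) (ηxρ x ρ t) ρ)
    (hηxt : ∀ x ∈ Set.Icc (0:ℝ) L, ∀ ρ ∈ Set.Icc (0:ℝ) 1, ∀ t ∈ Set.Ici (0:ℝ),
      HasDerivAt (fun s => ηx x ρ s) (ηxt x ρ t) t)
    (hηcont : ContinuousOn (fun q : ℝ × ℝ × ℝ => η q.1 q.2.1 q.2.2)
      (Set.Icc 0 L ×ˢ Set.Icc 0 1 ×ˢ Set.Ici 0))
    (hηxcont : ContinuousOn (fun q : ℝ × ℝ × ℝ => ηx q.1 q.2.1 q.2.2)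
      (Set.Icc 0 L ×ˢ Set.Icc 0 1 ×ˢ Set.Ici 0))
    (hηρcont : ContinuousOn (fun q : ℝ × ℝ × ℝ => ηρ q.1 q.2.1 q.2.2)
      (Set.Icc 0 L ×ˢ Set.Icc 0 1 ×ˢ Set.Ici 0))
    (hηtcont : ContinuousOn (fun q : ℝ × ℝ × ℝ => ηt q.1 q.2.1 q.2.2)
      (Set.Icc 0 L ×ˢ Set.Icc 0 1 ×ˢ Set.Ici 0))
    (hηxρcont : ContinuousOn (fun q : ℝ × ℝ × ℝ => ηxρ q.1 q.2.1 q.2.2)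
      (Set.Icc 0 L ×ˢ Set.Icc 0 1 ×ˢ Set.Ici 0))
    (hηxtcont : ContinuousOn (fun q : ℝ × ℝ × ℝ => ηxt q.1 q.2.1 q.2.2)
      (Set.Icc 0 L ×ˢ Set.Icc 0 1 ×ˢ Set.Ici 0))
    -- (i) the stress S and the first equation
    (hSdef1 : ∀ t ∈ Set.Ioi (0:ℝ), ∀ x ∈ Set.Ioo (0:ℝ) β,
      S x t = (a : ℂ) * ux x t + (κ₁ : ℂ) * utx x t + (κ₂ : ℂ) * ηx x 1 t)
    (hSdef2 : ∀ t ∈ Set.Ioi (0:ℝ), ∀ x ∈ Set.Ioo β L, S x t = (a : ℂ) * ux x t)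
    (hSx : ∀ t ∈ Set.Ioi (0:ℝ), ∀ x ∈ Set.Icc (0:ℝ) L,
      HasDerivAt (fun ξ => S ξ t) (Sx x t) x)
    (hSxcont : ∀ t ∈ Set.Ioi (0:ℝ), ContinuousOn (fun x => Sx x t) (Set.Icc 0 L))
    (heq1 : ∀ x ∈ Set.Ioo (0:ℝ) L, ∀ t ∈ Set.Ioi (0:ℝ),
      utt x t - Sx x t + (c x : ℂ) * yt x t = 0)
    -- (ii) the second wave equation
    (heq2 : ∀ x ∈ Set.Ioo (0:ℝ) L, ∀ t ∈ Set.Ioi (0:ℝ),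
      ytt x t - yxx x t - (c x : ℂ) * ut x t = 0)
    -- (iii) the transport equation
    (heq3 : ∀ x ∈ Set.Ioo (0:ℝ) L, ∀ ρ ∈ Set.Ioo (0:ℝ) 1, ∀ t ∈ Set.Ioi (0:ℝ),
      (τ : ℂ) * ηt x ρ t + ηρ x ρ t = 0)
    -- (iv) boundary conditions
    (hbc : ∀ t ∈ Set.Ioi (0:ℝ), u 0 t = 0 ∧ u L t = 0 ∧ y 0 t = 0 ∧ y L t = 0)
    (hηbc : ∀ t ∈ Set.Ioi (0:ℝ), ∀ ρ ∈ Set.Ioo (0:ℝ) 1, η 0 ρ t = 0)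
    -- (v) compatibility condition
    (hη0 : ∀ x ∈ Set.Icc (0:ℝ) L, ∀ t ∈ Set.Ici (0:ℝ), η x 0 t = ut x t) :
    ∀ t ∈ Set.Ioi (0:ℝ), ∃ d : ℝ,
      HasDerivAt (fun s =>
          (1 / 2) * (∫ x in (0:ℝ)..L, (‖ut x s‖ ^ 2 + a * ‖ux x s‖ ^ 2))
          + (1 / 2) * (∫ x in (0:ℝ)..L, (‖yt x s‖ ^ 2 + ‖yx x s‖ ^ 2))
          + (τ * |κ₂| / 2) * (∫ x in (0:ℝ)..β, ∫ ρ in (0:ℝ)..1, ‖ηx x ρ s‖ ^ 2)) d t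
      ∧ d ≤ -(κ₁ - |κ₂|) * ∫ x in (0:ℝ)..β, ‖ηx x 0 t‖ ^ 2 :=
  stmt_0_general L τ a κ₁ κ₂ α β γ hτ hα hαβ hβγ hγL c u ut utt ux utx y yt ytt yx yxx ytx η ηx ηρ
    ηt ηxρ ηxt S Sx hut hutt hutx huxt hutcont huttcont huxcont hutxcont hyt hytt hyxx hytx hyxt
    hytcont hyttcont hyxcont hyxxcont hytxcont hηx hηρ hηt hηxρ hηxt hηxcont hηxρcont hηxtcont
    hSdef1 hSdef2 hSx hSxcont heq1 heq2 heq3 hbc hη0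
end

section
/- Let 0 < α < β, let g : [α,β] → ℂ be real-valued and continuously differentiable with g(α) = 1 and g(β) = −1, and set M_g = max_{[α,β]} |g| and M_{g′} = max_{[α,β]} |g′|. Let λ ∈ ℝ and let y, z, f : [α,β] → ℂ be continuously differentiable with i λ y′(x) − z′(x) = f′(x) for all x ∈ (α,β). Then |z(β)|² + |z(α)|² ≤ M_{g′} ∫_α^β |z|² dx + 2|λ| M_g (∫_α^β |y′|² dx)^{1/2} (∫_α^β |z|² dx)^{1/2} + 2 M_g (∫_α^β |f′|² dx)^{1/2} (∫_α^β |z|² dx)^{1/2}. -/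
/-!
Multiply the equation by `2 g z̄` and integrate: since `(g ‖z‖²)' = g' ‖z‖² + 2 g ⟪z, z'⟫`,
the boundary values `g(α) = 1`, `g(β) = -1` turn the fundamental theorem of calculus into
`‖z β‖² + ‖z α‖² = -∫ (g' ‖z‖² + 2 g ⟪z, z'⟫)`. Bounding `|g|`, `|g'|` by their maxima,
`‖z'‖` by `|λ| ‖y'‖ + ‖f'‖` through the equation, and the resulting cross terms by
Cauchy–Schwarz gives the estimate.
-/

open MeasureTheory Complex Set

open scoped RealInnerProductSpace

variable {E : Type*} [NormedAddCommGroup E] {a b : ℝ}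

lemma ContinuousOn.memLp_two_restrict_Ioc {u : ℝ → E} (hu : ContinuousOn u (Icc a b)) :
    MemLp u 2 (volume.restrict (Ioc a b)) := by
  have hIoc : ContinuousOn u (Ioc a b) := hu.mono Ioc_subset_Icc_self
  refine (memLp_two_iff_integrable_sq_norm (hIoc.aestronglyMeasurable measurableSet_Ioc)).2 ?_
  exact ((hu.norm.pow 2).integrableOn_Icc).mono_set Ioc_subset_Icc_self

namespace intervalIntegral

theorem integral_norm_mul_norm_le_sqrt_mul_sqrt (hab : a ≤ b) {u v : ℝ → E}
    (hu : ContinuousOn u (Icc a b)) (hv : ContinuousOn v (Icc a b)) :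
    ∫ x in a..b, ‖u x‖ * ‖v x‖ ≤
      √(∫ x in a..b, ‖u x‖ ^ 2) * √(∫ x in a..b, ‖v x‖ ^ 2) := by
  have := integral_mul_norm_le_Lp_mul_Lq Real.HolderConjugate.two_two
    (by simpa using hu.memLp_two_restrict_Ioc) (by simpa using hv.memLp_two_restrict_Ioc)
  simpa only [integral_of_le hab, Real.rpow_two, Real.sqrt_eq_rpow, one_div] using this

theorem integral_norm_mul_norm_le_of_norm_le (hab : a ≤ b) {u v w z : ℝ → E} {c : ℝ}
    (hu : ContinuousOn u (Icc a b)) (hv : ContinuousOn v (Icc a b))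
    (hw : ContinuousOn w (Icc a b)) (hz : ContinuousOn z (Icc a b))
    (h : ∀ x ∈ Ioo a b, ‖u x‖ ≤ c * ‖v x‖ + ‖w x‖) :
    ∫ x in a..b, ‖u x‖ * ‖z x‖ ≤
      c * (∫ x in a..b, ‖v x‖ * ‖z x‖) + ∫ x in a..b, ‖w x‖ * ‖z x‖ := by
  have hvz : IntervalIntegrable (fun x => ‖v x‖ * ‖z x‖) volume a b :=
    (hv.norm.mul hz.norm).intervalIntegrable_of_Icc hab
  have hwz : IntervalIntegrable (fun x => ‖w x‖ * ‖z x‖) volume a b :=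
    (hw.norm.mul hz.norm).intervalIntegrable_of_Icc hab
  rw [← integral_const_mul, ← integral_add (hvz.const_mul _) hwz]
  refine integral_mono_on_of_le_Ioo hab ((hu.norm.mul hz.norm).intervalIntegrable_of_Icc hab)
    ((hvz.const_mul _).add hwz) fun x hx => ?_
  nlinarith [h x hx, norm_nonneg (z x)]

end intervalIntegral

section Multiplier

variable {E : Type*} [NormedAddCommGroup E] [InnerProductSpace ℝ E] {a b : ℝ}
  {g g' : ℝ → ℝ} {z z' : ℝ → E}

lemma continuousOn_deriv_mul_norm_sq (hg : ∀ x ∈ Icc a b, HasDerivAt g (g' x) x)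
    (hz : ∀ x ∈ Icc a b, HasDerivAt z (z' x) x)
    (hg'c : ContinuousOn g' (Icc a b)) (hz'c : ContinuousOn z' (Icc a b)) :
    ContinuousOn (fun x => g' x * ‖z x‖ ^ 2 + g x * (2 * ⟪z x, z' x⟫)) (Icc a b) := by
  have hgc : ContinuousOn g (Icc a b) := fun x hx => (hg x hx).continuousAt.continuousWithinAt
  have hzc : ContinuousOn z (Icc a b) := fun x hx => (hz x hx).continuousAt.continuousWithinAt
  exact (hg'c.mul (hzc.norm.pow 2)).add (hgc.mul (continuousOn_const.mul (hzc.inner hz'c)))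

theorem integral_deriv_mul_norm_sq (hab : a ≤ b)
    (hg : ∀ x ∈ Icc a b, HasDerivAt g (g' x) x) (hz : ∀ x ∈ Icc a b, HasDerivAt z (z' x) x)
    (hg'c : ContinuousOn g' (Icc a b)) (hz'c : ContinuousOn z' (Icc a b)) :
    ∫ x in a..b, (g' x * ‖z x‖ ^ 2 + g x * (2 * ⟪z x, z' x⟫)) =
      g b * ‖z b‖ ^ 2 - g a * ‖z a‖ ^ 2 := by
  refine intervalIntegral.integral_eq_sub_of_hasDerivAt (f := fun t => g t * ‖z t‖ ^ 2)
    (fun x hx => ?_)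
    ((continuousOn_deriv_mul_norm_sq hg hz hg'c hz'c).intervalIntegrable_of_Icc hab)
  rw [uIcc_of_le hab] at hx
  exact (hg x hx).mul (hz x hx).norm_sq

theorem norm_sq_add_norm_sq_le_of_multiplier (hab : a ≤ b)
    (hg : ∀ x ∈ Icc a b, HasDerivAt g (g' x) x) (hz : ∀ x ∈ Icc a b, HasDerivAt z (z' x) x)
    (hg'c : ContinuousOn g' (Icc a b)) (hz'c : ContinuousOn z' (Icc a b))
    (hga : g a = 1) (hgb : g b = -1) {Mg Mg' : ℝ}
    (hMg : ∀ x ∈ Icc a b, |g x| ≤ Mg) (hMg' : ∀ x ∈ Icc a b, |g' x| ≤ Mg') :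
    ‖z b‖ ^ 2 + ‖z a‖ ^ 2 ≤
      Mg' * (∫ x in a..b, ‖z x‖ ^ 2) + 2 * Mg * ∫ x in a..b, ‖z' x‖ * ‖z x‖ := by
  have hzc : ContinuousOn z (Icc a b) := fun x hx => (hz x hx).continuousAt.continuousWithinAt
  have hMg0 : 0 ≤ Mg := (abs_nonneg _).trans (hMg a (left_mem_Icc.2 hab))
  have hpt : ∀ x ∈ Icc a b, -(g' x * ‖z x‖ ^ 2 + g x * (2 * ⟪z x, z' x⟫)) ≤
      Mg' * ‖z x‖ ^ 2 + 2 * Mg * (‖z' x‖ * ‖z x‖) := by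
    intro x hx
    have hg'x : -(g' x * ‖z x‖ ^ 2) ≤ Mg' * ‖z x‖ ^ 2 := by
      nlinarith [neg_abs_le (g' x), hMg' x hx, sq_nonneg ‖z x‖]
    have hgx : -(g x * (2 * ⟪z x, z' x⟫)) ≤ Mg * (2 * (‖z x‖ * ‖z' x‖)) := by
      refine (neg_le_abs _).trans ?_
      rw [abs_mul, abs_mul, abs_two]
      gcongr
      · exact hMg x hx
      · exact abs_real_inner_le_norm _ _
    linarith
  have hq : IntervalIntegrable (fun x => ‖z x‖ ^ 2) volume a b :=
    (hzc.norm.pow 2).intervalIntegrable_of_Icc hab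
  have hp : IntervalIntegrable (fun x => ‖z' x‖ * ‖z x‖) volume a b :=
    (hz'c.norm.mul hzc.norm).intervalIntegrable_of_Icc hab
  calc ‖z b‖ ^ 2 + ‖z a‖ ^ 2
      = ∫ x in a..b, -(g' x * ‖z x‖ ^ 2 + g x * (2 * ⟪z x, z' x⟫)) := by
        rw [intervalIntegral.integral_neg, integral_deriv_mul_norm_sq hab hg hz hg'c hz'c,
          hga, hgb]
        ring
    _ ≤ ∫ x in a..b, (Mg' * ‖z x‖ ^ 2 + 2 * Mg * (‖z' x‖ * ‖z x‖)) :=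
        intervalIntegral.integral_mono_on hab
          ((continuousOn_deriv_mul_norm_sq hg hz hg'c hz'c).intervalIntegrable_of_Icc hab).neg
          ((hq.const_mul _).add (hp.const_mul _)) hpt
    _ = _ := by
        rw [intervalIntegral.integral_add (hq.const_mul _) (hp.const_mul _),
          intervalIntegral.integral_const_mul, intervalIntegral.integral_const_mul]

end Multiplier

theorem stmt_5_general (α β lam Mg Mg' : ℝ) (hαβ : α < β)
    (g g' : ℝ → ℝ)
    (hg : ∀ x ∈ Set.Icc α β, HasDerivAt g (g' x) x)
    (hg'c : ContinuousOn g' (Set.Icc α β))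
    (hgα : g α = 1) (hgβ : g β = -1)
    (hMg : IsGreatest ((fun x => |g x|) '' Set.Icc α β) Mg)
    (hMg' : IsGreatest ((fun x => |g' x|) '' Set.Icc α β) Mg')
    (z y' z' f' : ℝ → ℂ)
    (hz : ∀ x ∈ Set.Icc α β, HasDerivAt z (z' x) x)
    (hy'c : ContinuousOn y' (Set.Icc α β))
    (hz'c : ContinuousOn z' (Set.Icc α β))
    (hf'c : ContinuousOn f' (Set.Icc α β))
    (heq : ∀ x ∈ Set.Ioo α β, Complex.I * (lam : ℂ) * y' x - z' x = f' x) :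
    ‖z β‖ ^ 2 + ‖z α‖ ^ 2 ≤
      Mg' * (∫ x in α..β, ‖z x‖ ^ 2)
        + 2 * |lam| * Mg * Real.sqrt (∫ x in α..β, ‖y' x‖ ^ 2)
            * Real.sqrt (∫ x in α..β, ‖z x‖ ^ 2)
        + 2 * Mg * Real.sqrt (∫ x in α..β, ‖f' x‖ ^ 2)
            * Real.sqrt (∫ x in α..β, ‖z x‖ ^ 2) := by
  have hab := hαβ.le
  have hzc : ContinuousOn z (Icc α β) := fun x hx => (hz x hx).continuousAt.continuousWithinAt
  have hMg0 : 0 ≤ Mg := (abs_nonneg _).trans (hMg.2 ⟨α, left_mem_Icc.2 hab, rfl⟩)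
  have htrace := norm_sq_add_norm_sq_le_of_multiplier hab hg hz hg'c hz'c hgα hgβ
    (fun x hx => hMg.2 ⟨x, hx, rfl⟩) (fun x hx => hMg'.2 ⟨x, hx, rfl⟩)
  have hz'_le : ∀ x ∈ Ioo α β, ‖z' x‖ ≤ |lam| * ‖y' x‖ + ‖f' x‖ := by
    intro x hx
    have hz' : z' x = I * lam * y' x - f' x := by linear_combination -heq x hx
    simpa [hz'] using norm_sub_le (I * lam * y' x) (f' x)
  have hcross :=
    intervalIntegral.integral_norm_mul_norm_le_of_norm_le hab hz'c hy'c hf'c hzc hz'_le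
  have hcs_y := intervalIntegral.integral_norm_mul_norm_le_sqrt_mul_sqrt hab hy'c hzc
  have hcs_f := intervalIntegral.integral_norm_mul_norm_le_sqrt_mul_sqrt hab hf'c hzc
  calc ‖z β‖ ^ 2 + ‖z α‖ ^ 2
      ≤ Mg' * (∫ x in α..β, ‖z x‖ ^ 2) + 2 * Mg * ∫ x in α..β, ‖z' x‖ * ‖z x‖ := htrace
    _ ≤ Mg' * (∫ x in α..β, ‖z x‖ ^ 2) + 2 * Mg *
          (|lam| * (√(∫ x in α..β, ‖y' x‖ ^ 2) * √(∫ x in α..β, ‖z x‖ ^ 2)) +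
            √(∫ x in α..β, ‖f' x‖ ^ 2) * √(∫ x in α..β, ‖z x‖ ^ 2)) := by
        gcongr
        exact hcross.trans (by gcongr)
    _ = _ := by ring

/-- Boundary-trace estimate for `z` from the differentiated resolvent equation
`iλy′ − z′ = f′` on `(α,β)`, via the multiplier `2 g z̄`. -/
theorem stmt_5 (α β lam Mg Mg' : ℝ) (hα : 0 < α) (hαβ : α < β)
    (g g' : ℝ → ℝ)
    (hg : ∀ x ∈ Set.Icc α β, HasDerivAt g (g' x) x)
    (hg'c : ContinuousOn g' (Set.Icc α β))
    (hgα : g α = 1) (hgβ : g β = -1)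
    (hMg : IsGreatest ((fun x => |g x|) '' Set.Icc α β) Mg)
    (hMg' : IsGreatest ((fun x => |g' x|) '' Set.Icc α β) Mg')
    (y z f y' z' f' : ℝ → ℂ)
    (hy : ∀ x ∈ Set.Icc α β, HasDerivAt y (y' x) x)
    (hz : ∀ x ∈ Set.Icc α β, HasDerivAt z (z' x) x)
    (hf : ∀ x ∈ Set.Icc α β, HasDerivAt f (f' x) x)
    (hy'c : ContinuousOn y' (Set.Icc α β))
    (hz'c : ContinuousOn z' (Set.Icc α β))
    (hf'c : ContinuousOn f' (Set.Icc α β))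
    (heq : ∀ x ∈ Set.Ioo α β, Complex.I * (lam : ℂ) * y' x - z' x = f' x) :
    ‖z β‖ ^ 2 + ‖z α‖ ^ 2 ≤
      Mg' * (∫ x in α..β, ‖z x‖ ^ 2)
        + 2 * |lam| * Mg * Real.sqrt (∫ x in α..β, ‖y' x‖ ^ 2)
            * Real.sqrt (∫ x in α..β, ‖z x‖ ^ 2)
        + 2 * Mg * Real.sqrt (∫ x in α..β, ‖f' x‖ ^ 2)
            * Real.sqrt (∫ x in α..β, ‖z x‖ ^ 2) :=
  stmt_5_general α β lam Mg Mg' hαβ g g' hg hg'c hgα hgβ hMg hMg' z y' z' f' hz hy'c hz'c hf'c heq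
end

section
/- Let 0 < α < β, let g : [α,β] → ℂ be real-valued and continuously differentiable with g(α) = 1 and g(β) = −1, and set M_g = max_{[α,β]} |g| and M_{g′} = max_{[α,β]} |g′|. Let λ ∈ ℝ, c₀ > 0, let y : [α,β] → ℂ be twice continuously differentiable, and let v, z, f : [α,β] → ℂ be continuous with i λ z(x) − y″(x) − c₀ v(x) = f(x) for all x ∈ (α,β). Then |y′(β)|² + |y′(α)|² ≤ M_{g′} ∫_α^β |y′|² dx + 2|λ| M_g (∫_α^β |y′|² dx)^{1/2} (∫_α^β |z|² dx)^{1/2} + 2 c₀ M_g (∫_α^β |y′|² dx)^{1/2} (∫_α^β |v|² dx)^{1/2} + 2 M_g (∫_α^β |f|² dx)^{1/2} (∫_α^β |y′|² dx)^{1/2}. -/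
/-!
With the multiplier `2 g ȳ′` one has `(g |y′|²)′ = g′ |y′|² + 2 g Re (ȳ′ y″)`, so integrating over
`[α, β]` and using `g α = 1`, `g β = -1` expresses `|y′ β|² + |y′ α|²` as
`-∫ (g′ |y′|² + 2 g Re (ȳ′ y″))`. The resolvent equation bounds `|y″|` pointwise by
`|λ| |z| + c₀ |v| + |f|`, and Cauchy–Schwarz turns the resulting integrals into the stated products.
-/

open MeasureTheory Complex

open Set Real

section CauchySchwarz

variable {α E : Type*} [MeasurableSpace α] {μ : Measure α} [NormedAddCommGroup E]

theorem integral_norm_mul_norm_le_sqrt_mul_sqrt {f g : α → E} (hf : MemLp f 2 μ)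
    (hg : MemLp g 2 μ) :
    ∫ a, ‖f a‖ * ‖g a‖ ∂μ ≤ √(∫ a, ‖f a‖ ^ 2 ∂μ) * √(∫ a, ‖g a‖ ^ 2 ∂μ) := by
  have h := integral_mul_norm_le_Lp_mul_Lq Real.HolderConjugate.two_two
    (by simpa using hf) (by simpa using hg)
  simpa only [Real.rpow_two, Real.sqrt_eq_rpow, one_div] using h

theorem intervalIntegral_norm_mul_norm_le_sqrt_mul_sqrt {a b : ℝ} (hab : a ≤ b) {f g : ℝ → E}
    (hf : ContinuousOn f (Icc a b)) (hg : ContinuousOn g (Icc a b)) :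
    ∫ x in a..b, ‖f x‖ * ‖g x‖ ≤ √(∫ x in a..b, ‖f x‖ ^ 2) * √(∫ x in a..b, ‖g x‖ ^ 2) := by
  have memLp : ∀ u : ℝ → E, ContinuousOn u (Icc a b) → MemLp u 2 (volume.restrict (Ioc a b)) :=
    fun u hu => (memLp_two_iff_integrable_sq_norm
      ((hu.mono Ioc_subset_Icc_self).aestronglyMeasurable measurableSet_Ioc)).2
      ((hu.norm.pow 2).integrableOn_Icc.mono_set Ioc_subset_Icc_self)
  simp only [intervalIntegral.integral_of_le hab]
  exact integral_norm_mul_norm_le_sqrt_mul_sqrt (memLp f hf) (memLp g hg)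

end CauchySchwarz

section Multiplier

variable {F : Type*} [NormedAddCommGroup F] [InnerProductSpace ℝ F]

theorem neg_deriv_mul_norm_sq_le {g g' Mg Mg' h : ℝ} {u u' : F} (hg : |g| ≤ Mg)
    (hg' : |g'| ≤ Mg') (hu' : ‖u'‖ ≤ h) :
    -(g' * ‖u‖ ^ 2 + g * (2 * inner ℝ u u')) ≤ Mg' * ‖u‖ ^ 2 + 2 * Mg * (‖u‖ * h) := by
  have hinner : |g * inner ℝ u u'| ≤ Mg * (‖u‖ * h) := by
    rw [abs_mul]
    exact mul_le_mul hg ((abs_real_inner_le_norm u u').trans (by gcongr))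
      (abs_nonneg _) ((abs_nonneg g).trans hg)
  have hg'u : |g' * ‖u‖ ^ 2| ≤ Mg' * ‖u‖ ^ 2 := by
    rw [abs_mul, abs_of_nonneg (sq_nonneg ‖u‖)]
    exact mul_le_mul_of_nonneg_right hg' (sq_nonneg ‖u‖)
  linarith [neg_abs_le (g' * ‖u‖ ^ 2), neg_abs_le (g * inner ℝ u u')]

theorem mul_norm_sq_sub_le_integral {a b Mg Mg' : ℝ} (hab : a ≤ b) {g g' h : ℝ → ℝ}
    {u u' : ℝ → F} (hg : ∀ x ∈ Icc a b, HasDerivAt g (g' x) x)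
    (hMg : ∀ x ∈ Icc a b, |g x| ≤ Mg) (hMg' : ∀ x ∈ Icc a b, |g' x| ≤ Mg')
    (hu : ∀ x ∈ Icc a b, HasDerivAt u (u' x) x) (hh : ContinuousOn h (Icc a b))
    (hu'h : ∀ x ∈ Ioo a b, ‖u' x‖ ≤ h x) :
    g a * ‖u a‖ ^ 2 - g b * ‖u b‖ ^ 2 ≤ ∫ x in a..b, Mg' * ‖u x‖ ^ 2 + 2 * Mg * (‖u x‖ * h x) := by
  have hderiv : ∀ x ∈ Icc a b, HasDerivAt (fun t => -(g t * ‖u t‖ ^ 2))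
      (-(g' x * ‖u x‖ ^ 2 + g x * (2 * inner ℝ (u x) (u' x)))) x :=
    fun x hx => ((hg x hx).mul (hu x hx).norm_sq).neg
  have hcont : ContinuousOn u (Icc a b) := fun x hx => (hu x hx).continuousAt.continuousWithinAt
  have key := intervalIntegral.sub_le_integral_of_hasDeriv_right_of_le
    (φ := fun x => Mg' * ‖u x‖ ^ 2 + 2 * Mg * (‖u x‖ * h x)) hab
    (fun x hx => (hderiv x hx).continuousAt.continuousWithinAt)
    (fun x hx => (hderiv x (Ioo_subset_Icc_self hx)).hasDerivWithinAt)
    ((continuousOn_const.mul (hcont.norm.pow 2)).add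
      (continuousOn_const.mul (hcont.norm.mul hh))).integrableOn_Icc
    (fun x hx => neg_deriv_mul_norm_sq_le (hMg x (Ioo_subset_Icc_self hx))
      (hMg' x (Ioo_subset_Icc_self hx)) (hu'h x hx))
  linarith

end Multiplier

theorem norm_le_of_resolvent_eq {lam c : ℝ} {z w v f : ℂ} (h : I * lam * z - w - c * v = f) :
    ‖w‖ ≤ |lam| * ‖z‖ + |c| * ‖v‖ + ‖f‖ := by
  calc ‖w‖ = ‖I * lam * z - c * v - f‖ := by rw [← h]; ring_nf
    _ ≤ ‖I * lam * z‖ + ‖(c : ℂ) * v‖ + ‖f‖ := norm_sub_le_of_le (norm_sub_le _ _) le_rfl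
    _ = |lam| * ‖z‖ + |c| * ‖v‖ + ‖f‖ := by simp

theorem integral_norm_sq_add_norm_mul_resolvent_le {E : Type*} [NormedAddCommGroup E]
    {a b lam c Mg Mg' : ℝ} (hab : a ≤ b) (hc : 0 ≤ c) (hMg : 0 ≤ Mg) {u z v f : ℝ → E}
    (hu : ContinuousOn u (Icc a b)) (hz : ContinuousOn z (Icc a b))
    (hv : ContinuousOn v (Icc a b)) (hf : ContinuousOn f (Icc a b)) :
    ∫ x in a..b, Mg' * ‖u x‖ ^ 2 + 2 * Mg * (‖u x‖ * (|lam| * ‖z x‖ + c * ‖v x‖ + ‖f x‖)) ≤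
      Mg' * (∫ x in a..b, ‖u x‖ ^ 2)
        + 2 * |lam| * Mg * √(∫ x in a..b, ‖u x‖ ^ 2) * √(∫ x in a..b, ‖z x‖ ^ 2)
        + 2 * c * Mg * √(∫ x in a..b, ‖u x‖ ^ 2) * √(∫ x in a..b, ‖v x‖ ^ 2)
        + 2 * Mg * √(∫ x in a..b, ‖f x‖ ^ 2) * √(∫ x in a..b, ‖u x‖ ^ 2) := by
  have hint : ∀ p q : ℝ → E, ContinuousOn p (Icc a b) → ContinuousOn q (Icc a b) →
      IntervalIntegrable (fun x => ‖p x‖ * ‖q x‖) volume a b := fun p q hp hq =>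
    (hp.norm.mul hq.norm).intervalIntegrable_of_Icc hab
  have iuu := (hint u u hu hu).const_mul Mg'
  have iuz := (hint u z hu hz).const_mul (2 * |lam| * Mg)
  have iuv := (hint u v hu hv).const_mul (2 * c * Mg)
  have ifu := (hint f u hf hu).const_mul (2 * Mg)
  have hexpand : ∀ x, Mg' * ‖u x‖ ^ 2 + 2 * Mg * (‖u x‖ * (|lam| * ‖z x‖ + c * ‖v x‖ + ‖f x‖))
      = Mg' * (‖u x‖ * ‖u x‖) + 2 * |lam| * Mg * (‖u x‖ * ‖z x‖)
        + 2 * c * Mg * (‖u x‖ * ‖v x‖) + 2 * Mg * (‖f x‖ * ‖u x‖) := fun x => by ring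
  simp_rw [hexpand]
  rw [intervalIntegral.integral_add ((iuu.add iuz).add iuv) ifu,
    intervalIntegral.integral_add (iuu.add iuz) iuv, intervalIntegral.integral_add iuu iuz]
  simp only [intervalIntegral.integral_const_mul, ← sq]
  grw [intervalIntegral_norm_mul_norm_le_sqrt_mul_sqrt hab hu hz,
    intervalIntegral_norm_mul_norm_le_sqrt_mul_sqrt hab hu hv,
    intervalIntegral_norm_mul_norm_le_sqrt_mul_sqrt hab hf hu]
  apply le_of_eq
  ring

theorem stmt_6_general (α β lam c₀ Mg Mg' : ℝ) (hαβ : α < β) (hc₀ : 0 < c₀)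
    (g g' : ℝ → ℝ)
    (hg : ∀ x ∈ Set.Icc α β, HasDerivAt g (g' x) x)
    (hgα : g α = 1) (hgβ : g β = -1)
    (hMg : IsGreatest ((fun x => |g x|) '' Set.Icc α β) Mg)
    (hMg' : IsGreatest ((fun x => |g' x|) '' Set.Icc α β) Mg')
    (y' y'' v z f : ℝ → ℂ)
    (hy' : ∀ x ∈ Set.Icc α β, HasDerivAt y' (y'' x) x)
    (hvc : ContinuousOn v (Set.Icc α β))
    (hzc : ContinuousOn z (Set.Icc α β))
    (hfc : ContinuousOn f (Set.Icc α β))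
    (heq : ∀ x ∈ Set.Ioo α β,
      Complex.I * (lam : ℂ) * z x - y'' x - (c₀ : ℂ) * v x = f x) :
    ‖y' β‖ ^ 2 + ‖y' α‖ ^ 2 ≤
      Mg' * (∫ x in α..β, ‖y' x‖ ^ 2)
        + 2 * |lam| * Mg * Real.sqrt (∫ x in α..β, ‖y' x‖ ^ 2)
            * Real.sqrt (∫ x in α..β, ‖z x‖ ^ 2)
        + 2 * c₀ * Mg * Real.sqrt (∫ x in α..β, ‖y' x‖ ^ 2)
            * Real.sqrt (∫ x in α..β, ‖v x‖ ^ 2)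
        + 2 * Mg * Real.sqrt (∫ x in α..β, ‖f x‖ ^ 2)
            * Real.sqrt (∫ x in α..β, ‖y' x‖ ^ 2) := by
  have hab := hαβ.le
  have hMg0 : 0 ≤ Mg := (abs_nonneg _).trans (hMg.2 ⟨α, left_mem_Icc.2 hab, rfl⟩)
  have hy'c : ContinuousOn y' (Icc α β) := fun x hx => (hy' x hx).continuousAt.continuousWithinAt
  have hy'' : ∀ x ∈ Ioo α β, ‖y'' x‖ ≤ |lam| * ‖z x‖ + c₀ * ‖v x‖ + ‖f x‖ := fun x hx => by
    simpa only [abs_of_pos hc₀] using norm_le_of_resolvent_eq (heq x hx)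
  have hmult := mul_norm_sq_sub_le_integral (h := fun x => |lam| * ‖z x‖ + c₀ * ‖v x‖ + ‖f x‖)
    hab hg (fun x hx => hMg.2 ⟨x, hx, rfl⟩) (fun x hx => hMg'.2 ⟨x, hx, rfl⟩) hy'
    (((continuousOn_const.mul hzc.norm).add (continuousOn_const.mul hvc.norm)).add hfc.norm) hy''
  have hcs := integral_norm_sq_add_norm_mul_resolvent_le (lam := lam) (Mg' := Mg') hab hc₀.le hMg0
    hy'c hzc hvc hfc
  rw [hgα, hgβ] at hmult
  linarith

/-- Boundary-trace estimate for `y′` from the resolvent equation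
`iλz − y″ − c₀v = f` on `(α,β)`, via the multiplier `2 g ȳ′`. -/
theorem stmt_6 (α β lam c₀ Mg Mg' : ℝ) (hα : 0 < α) (hαβ : α < β) (hc₀ : 0 < c₀)
    (g g' : ℝ → ℝ)
    (hg : ∀ x ∈ Set.Icc α β, HasDerivAt g (g' x) x)
    (hg'c : ContinuousOn g' (Set.Icc α β))
    (hgα : g α = 1) (hgβ : g β = -1)
    (hMg : IsGreatest ((fun x => |g x|) '' Set.Icc α β) Mg)
    (hMg' : IsGreatest ((fun x => |g' x|) '' Set.Icc α β) Mg')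
    (y y' y'' v z f : ℝ → ℂ)
    (hy : ∀ x ∈ Set.Icc α β, HasDerivAt y (y' x) x)
    (hy' : ∀ x ∈ Set.Icc α β, HasDerivAt y' (y'' x) x)
    (hy''c : ContinuousOn y'' (Set.Icc α β))
    (hvc : ContinuousOn v (Set.Icc α β))
    (hzc : ContinuousOn z (Set.Icc α β))
    (hfc : ContinuousOn f (Set.Icc α β))
    (heq : ∀ x ∈ Set.Ioo α β,
      Complex.I * (lam : ℂ) * z x - y'' x - (c₀ : ℂ) * v x = f x) :
    ‖y' β‖ ^ 2 + ‖y' α‖ ^ 2 ≤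
      Mg' * (∫ x in α..β, ‖y' x‖ ^ 2)
        + 2 * |lam| * Mg * Real.sqrt (∫ x in α..β, ‖y' x‖ ^ 2)
            * Real.sqrt (∫ x in α..β, ‖z x‖ ^ 2)
        + 2 * c₀ * Mg * Real.sqrt (∫ x in α..β, ‖y' x‖ ^ 2)
            * Real.sqrt (∫ x in α..β, ‖v x‖ ^ 2)
        + 2 * Mg * Real.sqrt (∫ x in α..β, ‖f x‖ ^ 2)
            * Real.sqrt (∫ x in α..β, ‖y' x‖ ^ 2) :=
  stmt_6_general α β lam c₀ Mg Mg' hαβ hc₀ g g' hg hgα hgβ hMg hMg' y' y'' v z f hy' hvc hzc hfc heq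
end

section
/- Let 0 < α < β < γ < L, a > 0, c₀ > 0, κ₁ > 0, κ₂ ∈ ℝ \ {0}, λ ∈ ℝ, and let h : [0,L] → ℝ be continuously differentiable. Let u : [0,L] → ℂ be differentiable, let v, z, f¹, f³ : [0,L] → ℂ be continuously differentiable with v(0) = v(L) = z(0) = z(L) = 0, let y : [0,L] → ℂ be twice continuously differentiable, let f², f⁴ : [0,L] → ℂ be continuous, let w : [0,β] → ℂ be continuous, and let S : [0,L] → ℂ be continuously differentiable with S(x) = a u′(x) + κ₁ v′(x) + κ₂ w(x) for x ∈ (0,β) and S(x) = a u′(x) for x ∈ (β,L). Assume that on (0,L): i λ u − v = f¹, i λ v − S′ + c(·) z = f², i λ y − z = f³, and i λ z − y″ − c(·) v = f⁴. Then ∫₀^L h′ ( a⁻¹|S|² + |v|² + |z|² + |y′|² ) dx − [ h ( a⁻¹|S|² + |y′|² ) ]₀^L − Re( 2 ∫₀^L c(·) h v ȳ′ dx ) + Re( (2/a) ∫₀^L c(·) h z S̄ dx ) + Re( (2 i λ / a) ∫₀^β h v ( κ₁ v̄′ + κ₂ w̄ ) dx ) = Re( 2 ∫₀^L h f̄¹′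 v dx ) + Re( (2/a) ∫₀^L h f² S̄ dx ) + Re( 2 ∫₀^L h f̄³′ z dx ) + Re( 2 ∫₀^L h f⁴ ȳ′ dx ), where [F]₀^L = F(L) − F(0). -/
/-!
Substituting the four equations into `2 Re (h f̄₁' v)`, `(2/a) Re (h f₂ S̄)`, `2 Re (h f̄₃' z)`
and `2 Re (h f₄ ȳ')` produces `h` times the derivative of the energy density
`a⁻¹|S|² + |v|² + |z|² + |y'|²`, the two coupling terms, and the cross terms
`± 2 Re (iλ h ū' v)`, which cancel once `S̄ = a ū' + (κ₁ v̄' + κ₂ w̄)` is inserted: only the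
`(κ₁ v̄' + κ₂ w̄)`-part survives, and only on `(0, β)`. Integrating by parts moves the derivative
onto `h`; the boundary terms of `v` and `z` vanish.
-/

open MeasureTheory Complex Set
open scoped ComplexConjugate InnerProductSpace Interval

theorem eqOn_Ioo_of_hasDerivAt {E : Type*} [NormedAddCommGroup E] [NormedSpace ℝ E]
    {f g f' g' : ℝ → E} {a b : ℝ} (hfg : EqOn f g (Ioo a b))
    (hf : ∀ x ∈ Icc a b, HasDerivAt f (f' x) x) (hg : ∀ x ∈ Icc a b, HasDerivAt g (g' x) x) :
    EqOn f' g' (Ioo a b) := fun x hx =>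
  (hf x (Ioo_subset_Icc_self hx)).unique ((hg x (Ioo_subset_Icc_self hx)).congr_of_eventuallyEq
    (Filter.eventually_of_mem (isOpen_Ioo.mem_nhds hx) hfg))

section IntervalIntegrable

variable {E : Type*} [NormedAddCommGroup E] {f : ℝ → E} {a b c : ℝ} {μ : Measure ℝ}

theorem IntervalIntegrable.indicator (hf : IntervalIntegrable f μ a b) {s : Set ℝ}
    (hs : MeasurableSet s) : IntervalIntegrable (s.indicator f) μ a b :=
  ⟨hf.1.indicator hs, hf.2.indicator hs⟩

theorem IntervalIntegrable.indicator_le (hf : IntervalIntegrable f μ a b) (hb : b ∈ Icc a c) :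
    IntervalIntegrable ({x | x ≤ b}.indicator f) μ a c := by
  rw [intervalIntegrable_iff_integrableOn_Ioc_of_le (hb.1.trans hb.2)]
  change IntegrableOn ((Iic b).indicator f) _ _
  rw [integrableOn_indicator_iff measurableSet_Iic, Iic_inter_Ioc_of_le hb.2]
  exact (intervalIntegrable_iff_integrableOn_Ioc_of_le hb.1).mp hf

theorem IntervalIntegrable.re {f : ℝ → ℂ} (hf : IntervalIntegrable f μ a b) :
    IntervalIntegrable (fun x => (f x).re) μ a b :=
  ⟨hf.1.re, hf.2.re⟩

theorem re_mul_intervalIntegral {f : ℝ → ℂ} (k : ℂ) (hf : IntervalIntegrable f μ a b) :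
    (k * ∫ x in a..b, f x ∂μ).re = ∫ x in a..b, (k * f x).re ∂μ := by
  rw [← intervalIntegral.integral_const_mul]
  exact (intervalIntegral.intervalIntegral_re (hf.const_mul k)).symm

end IntervalIntegrable

theorem intervalIntegrable_ofReal_ite {μ : Measure ℝ} [IsLocallyFiniteMeasure μ] {a b α γ c₀ : ℝ}
    {c : ℝ → ℝ} (hc : ∀ x, c x = if α < x ∧ x < γ then c₀ else 0) :
    IntervalIntegrable (fun x => (c x : ℂ)) μ a b := by
  have : (fun x => (c x : ℂ)) = (Ioo α γ).indicator (fun _ => (c₀ : ℂ)) := by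
    ext x; simp only [hc x, indicator_apply, mem_Ioo]; split_ifs <;> simp
  exact this ▸ intervalIntegrable_const.indicator measurableSet_Ioo

theorem multiplier_identity_pointwise {a lam c H : ℝ} (ha : a ≠ 0)
    {u' v v' z z' y' y'' t f₁' f₂ f₃' f₄ s s' : ℂ}
    (e₁ : I * lam * u' - v' = f₁') (e₂ : I * lam * v - s' + c * z = f₂)
    (e₃ : I * lam * y' - z' = f₃') (e₄ : I * lam * z - y'' - c * v = f₄)
    (hs : s = a * u' + t) :
    -(H * (a⁻¹ * (2 * ⟪s, s'⟫_ℝ) + 2 * ⟪v, v'⟫_ℝ + 2 * ⟪z, z'⟫_ℝ + 2 * ⟪y', y''⟫_ℝ))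
      - (2 * (c * H * v * conj y')).re + (((2 / a : ℝ) : ℂ) * (c * H * z * conj s)).re
      + (2 * I * lam / a * (H * v * conj t)).re
    = (2 * (H * conj f₁' * v)).re + (((2 / a : ℝ) : ℂ) * (H * f₂ * conj s)).re
      + (2 * (H * conj f₃' * z)).re + (2 * (H * f₄ * conj y')).re := by
  subst e₁ e₂ e₃ e₄ hs
  have h2a : (2 * I * lam / a : ℂ) = ((2 / a : ℝ) : ℂ) * (I * lam) := by push_cast; ring
  rw [h2a]
  simp only [Complex.inner, map_add, map_mul, map_sub, conj_I, conj_ofReal, add_re, sub_re,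
    mul_re, mul_im, add_im, sub_im, I_re, I_im, ofReal_re, ofReal_im, conj_re, conj_im,
    re_ofNat, im_ofNat, neg_re, neg_im]
  field_simp
  ring

theorem multiplier_integrand_eq {a lam κ₁ κ₂ β x : ℝ} (ha : a ≠ 0) {c h : ℝ → ℝ}
    {u' v v' z z' y' y'' w f₁' f₂ f₃' f₄ S S' : ℝ → ℂ}
    (e₁ : I * lam * u' x - v' x = f₁' x) (e₂ : I * lam * v x - S' x + c x * z x = f₂ x)
    (e₃ : I * lam * y' x - z' x = f₃' x) (e₄ : I * lam * z x - y'' x - c x * v x = f₄ x)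
    (hS₁ : x < β → S x = a * u' x + κ₁ * v' x + κ₂ * w x) (hS₂ : β < x → S x = a * u' x)
    (hxβ : x ≠ β) :
    (((2 / a : ℝ) : ℂ) * (c x * h x * z x * conj (S x))).re
      + {t | t ≤ β}.indicator
          (fun t => (2 * I * lam / a * (h t * v t * (κ₁ * conj (v' t) + κ₂ * conj (w t)))).re) x
      - (2 * (c x * h x * v x * conj (y' x))).re
    = h x * (a⁻¹ * (2 * ⟪S x, S' x⟫_ℝ) + 2 * ⟪v x, v' x⟫_ℝ + 2 * ⟪z x, z' x⟫_ℝ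
        + 2 * ⟪y' x, y'' x⟫_ℝ)
      + (2 * (h x * conj (f₁' x) * v x)).re + (((2 / a : ℝ) : ℂ) * (h x * f₂ x * conj (S x))).re
      + (2 * (h x * conj (f₃' x) * z x)).re + (2 * (h x * f₄ x * conj (y' x))).re := by
  rcases hxβ.lt_or_gt with hx | hx
  · rw [indicator_of_mem (show x ∈ {t | t ≤ β} from hx.le)]
    have key := multiplier_identity_pointwise (H := h x) (s := S x) (t := κ₁ * v' x + κ₂ * w x) ha
      e₁ e₂ e₃ e₄ (by rw [hS₁ hx, add_assoc])
    rw [map_add, map_mul, map_mul, conj_ofReal, conj_ofReal] at key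
    linarith
  · rw [indicator_of_notMem (show x ∉ {t | t ≤ β} from hx.not_ge)]
    have key := multiplier_identity_pointwise (H := h x) (s := S x) (t := 0) ha e₁ e₂ e₃ e₄
      (by rw [hS₂ hx, add_zero])
    rw [map_zero, mul_zero, mul_zero, zero_re] at key
    linarith

theorem integral_multiplier_identity {L β a lam κ₁ κ₂ : ℝ} (ha : a ≠ 0) (hβ : β ∈ Icc 0 L)
    {c h : ℝ → ℝ} {u' v v' z z' y' y'' w f₁' f₂ f₃' f₄ S S' : ℝ → ℂ}
    (e₁ : ∀ x ∈ Ioo 0 L, I * lam * u' x - v' x = f₁' x)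
    (e₂ : ∀ x ∈ Ioo 0 L, I * lam * v x - S' x + c x * z x = f₂ x)
    (e₃ : ∀ x ∈ Ioo 0 L, I * lam * y' x - z' x = f₃' x)
    (e₄ : ∀ x ∈ Ioo 0 L, I * lam * z x - y'' x - c x * v x = f₄ x)
    (hS₁ : ∀ x ∈ Ioo 0 β, S x = a * u' x + κ₁ * v' x + κ₂ * w x)
    (hS₂ : ∀ x ∈ Ioo β L, S x = a * u' x)
    (i₁ : IntervalIntegrable (fun x => c x * h x * v x * conj (y' x)) volume 0 L)
    (i₂ : IntervalIntegrable (fun x => c x * h x * z x * conj (S x)) volume 0 L)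
    (i₃ : IntervalIntegrable (fun x => h x * v x * (κ₁ * conj (v' x) + κ₂ * conj (w x))) volume 0 β)
    (i₄ : IntervalIntegrable (fun x => h x * conj (f₁' x) * v x) volume 0 L)
    (i₅ : IntervalIntegrable (fun x => h x * f₂ x * conj (S x)) volume 0 L)
    (i₆ : IntervalIntegrable (fun x => h x * conj (f₃' x) * z x) volume 0 L)
    (i₇ : IntervalIntegrable (fun x => h x * f₄ x * conj (y' x)) volume 0 L)
    (ip : IntervalIntegrable (fun x => h x * (a⁻¹ * (2 * ⟪S x, S' x⟫_ℝ) + 2 * ⟪v x, v' x⟫_ℝ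
      + 2 * ⟪z x, z' x⟫_ℝ + 2 * ⟪y' x, y'' x⟫_ℝ)) volume 0 L) :
    (((2 / a : ℝ) : ℂ) * ∫ x in 0..L, c x * h x * z x * conj (S x)).re
      + (2 * I * lam / a * ∫ x in 0..β, h x * v x * (κ₁ * conj (v' x) + κ₂ * conj (w x))).re
      - (2 * ∫ x in 0..L, c x * h x * v x * conj (y' x)).re
    = (∫ x in 0..L, h x * (a⁻¹ * (2 * ⟪S x, S' x⟫_ℝ) + 2 * ⟪v x, v' x⟫_ℝ + 2 * ⟪z x, z' x⟫_ℝ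
        + 2 * ⟪y' x, y'' x⟫_ℝ))
      + (2 * ∫ x in 0..L, h x * conj (f₁' x) * v x).re
      + (((2 / a : ℝ) : ℂ) * ∫ x in 0..L, h x * f₂ x * conj (S x)).re
      + (2 * ∫ x in 0..L, h x * conj (f₃' x) * z x).re
      + (2 * ∫ x in 0..L, h x * f₄ x * conj (y' x)).re := by
  have hL : 0 ≤ L := hβ.1.trans hβ.2
  -- the `(0, β)` integral becomes one over `(0, L)`, so that a single pointwise identity applies
  rw [re_mul_intervalIntegral _ i₁, re_mul_intervalIntegral _ i₂, re_mul_intervalIntegral _ i₃,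
    re_mul_intervalIntegral _ i₄, re_mul_intervalIntegral _ i₅, re_mul_intervalIntegral _ i₆,
    re_mul_intervalIntegral _ i₇, ← intervalIntegral.integral_indicator hβ]
  have i₃' := (i₃.const_mul (2 * I * lam / a)).re.indicator_le hβ
  have key := intervalIntegral.integral_congr_ae (μ := volume) (a := 0) (b := L)
    (((volume.ae_ne β).and (volume.ae_ne L)).mono fun x ⟨hxβ, hxL⟩ hxI => by
      obtain ⟨hx0, hxL'⟩ : x ∈ Ioc 0 L := uIoc_of_le hL ▸ hxI
      have hx : x ∈ Ioo 0 L := ⟨hx0, hxL'.lt_of_ne hxL⟩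
      exact multiplier_integrand_eq (h := h) ha (e₁ x hx) (e₂ x hx) (e₃ x hx) (e₄ x hx)
        (fun hlt => hS₁ x ⟨hx.1, hlt⟩) (fun hgt => hS₂ x ⟨hgt, hx.2⟩) hxβ)
  rwa [intervalIntegral.integral_sub ((i₂.const_mul _).re.add i₃') (i₁.const_mul 2).re,
    intervalIntegral.integral_add (i₂.const_mul _).re i₃',
    intervalIntegral.integral_add ((((ip.add (i₄.const_mul 2).re).add (i₅.const_mul _).re).add
      (i₆.const_mul 2).re)) (i₇.const_mul 2).re,
    intervalIntegral.integral_add (((ip.add (i₄.const_mul 2).re).add (i₅.const_mul _).re))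
      (i₆.const_mul 2).re,
    intervalIntegral.integral_add (ip.add (i₄.const_mul 2).re) (i₅.const_mul _).re,
    intervalIntegral.integral_add ip (i₄.const_mul 2).re] at key

theorem integral_deriv_mul_energy {a L : ℝ} (hL : 0 ≤ L) {h h' : ℝ → ℝ}
    {S S' v v' z z' y' y'' : ℝ → ℂ}
    (hh : ∀ x ∈ Icc 0 L, HasDerivAt h (h' x) x) (hh'c : ContinuousOn h' (Icc 0 L))
    (hS : ∀ x ∈ Icc 0 L, HasDerivAt S (S' x) x) (hS'c : ContinuousOn S' (Icc 0 L))
    (hv : ∀ x ∈ Icc 0 L, HasDerivAt v (v' x) x) (hv'c : ContinuousOn v' (Icc 0 L))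
    (hz : ∀ x ∈ Icc 0 L, HasDerivAt z (z' x) x) (hz'c : ContinuousOn z' (Icc 0 L))
    (hy' : ∀ x ∈ Icc 0 L, HasDerivAt y' (y'' x) x) (hy''c : ContinuousOn y'' (Icc 0 L))
    (hv0 : v 0 = 0) (hvL : v L = 0) (hz0 : z 0 = 0) (hzL : z L = 0) :
    (∫ x in 0..L, h' x * (a⁻¹ * ‖S x‖ ^ 2 + ‖v x‖ ^ 2 + ‖z x‖ ^ 2 + ‖y' x‖ ^ 2))
      - (h L * (a⁻¹ * ‖S L‖ ^ 2 + ‖y' L‖ ^ 2) - h 0 * (a⁻¹ * ‖S 0‖ ^ 2 + ‖y' 0‖ ^ 2))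
    = -∫ x in 0..L, h x * (a⁻¹ * (2 * ⟪S x, S' x⟫_ℝ) + 2 * ⟪v x, v' x⟫_ℝ + 2 * ⟪z x, z' x⟫_ℝ
        + 2 * ⟪y' x, y'' x⟫_ℝ) := by
  rw [← uIcc_of_le hL] at hh hh'c hS hS'c hv hv'c hz hz'c hy' hy''c
  have hE : ∀ x ∈ [[0, L]],
      HasDerivAt (fun t => a⁻¹ * ‖S t‖ ^ 2 + ‖v t‖ ^ 2 + ‖z t‖ ^ 2 + ‖y' t‖ ^ 2)
      (a⁻¹ * (2 * ⟪S x, S' x⟫_ℝ) + 2 * ⟪v x, v' x⟫_ℝ + 2 * ⟪z x, z' x⟫_ℝ + 2 * ⟪y' x, y'' x⟫_ℝ) x :=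
    fun x hx => ((((hS x hx).norm_sq.const_mul _).add (hv x hx).norm_sq).add
      (hz x hx).norm_sq).add (hy' x hx).norm_sq
  have := HasDerivAt.continuousOn hS; have := HasDerivAt.continuousOn hv
  have := HasDerivAt.continuousOn hz; have := HasDerivAt.continuousOn hy'
  rw [intervalIntegral.integral_mul_deriv_eq_deriv_mul hh hE hh'c.intervalIntegrable
    (ContinuousOn.intervalIntegrable (by fun_prop))]
  simp only [hv0, hvL, hz0, hzL, norm_zero, ne_eq, OfNat.ofNat_ne_zero, not_false_eq_true,
    zero_pow, add_zero]
  ring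

theorem stmt_9_general (L α β γ a c₀ κ₁ κ₂ lam : ℝ)
    (hα : 0 < α) (hαβ : α < β) (hβγ : β < γ) (hγL : γ < L)
    (ha : 0 < a)
    (c : ℝ → ℝ) (hc : ∀ x, c x = if α < x ∧ x < γ then c₀ else 0)
    (h h' : ℝ → ℝ)
    (hh : ∀ x ∈ Set.Icc (0:ℝ) L, HasDerivAt h (h' x) x)
    (hh'c : ContinuousOn h' (Set.Icc 0 L))
    (u u' : ℝ → ℂ)
    (hu : ∀ x ∈ Set.Icc (0:ℝ) L, HasDerivAt u (u' x) x)
    (v v' z z' f₁ f₁' f₃ f₃' : ℝ → ℂ)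
    (hv : ∀ x ∈ Set.Icc (0:ℝ) L, HasDerivAt v (v' x) x)
    (hv'c : ContinuousOn v' (Set.Icc 0 L))
    (hz : ∀ x ∈ Set.Icc (0:ℝ) L, HasDerivAt z (z' x) x)
    (hz'c : ContinuousOn z' (Set.Icc 0 L))
    (hf₁ : ∀ x ∈ Set.Icc (0:ℝ) L, HasDerivAt f₁ (f₁' x) x)
    (hf₁'c : ContinuousOn f₁' (Set.Icc 0 L))
    (hf₃ : ∀ x ∈ Set.Icc (0:ℝ) L, HasDerivAt f₃ (f₃' x) x)
    (hf₃'c : ContinuousOn f₃' (Set.Icc 0 L))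
    (hv0 : v 0 = 0) (hvL : v L = 0) (hz0 : z 0 = 0) (hzL : z L = 0)
    (y y' y'' : ℝ → ℂ)
    (hy : ∀ x ∈ Set.Icc (0:ℝ) L, HasDerivAt y (y' x) x)
    (hy' : ∀ x ∈ Set.Icc (0:ℝ) L, HasDerivAt y' (y'' x) x)
    (hy''c : ContinuousOn y'' (Set.Icc 0 L))
    (f₂ f₄ : ℝ → ℂ)
    (hf₂c : ContinuousOn f₂ (Set.Icc 0 L)) (hf₄c : ContinuousOn f₄ (Set.Icc 0 L))
    (w : ℝ → ℂ) (hwc : ContinuousOn w (Set.Icc 0 β))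
    (S S' : ℝ → ℂ)
    (hS : ∀ x ∈ Set.Icc (0:ℝ) L, HasDerivAt S (S' x) x)
    (hS'c : ContinuousOn S' (Set.Icc 0 L))
    (hS1 : ∀ x ∈ Set.Ioo (0:ℝ) β,
      S x = (a : ℂ) * u' x + (κ₁ : ℂ) * v' x + (κ₂ : ℂ) * w x)
    (hS2 : ∀ x ∈ Set.Ioo β L, S x = (a : ℂ) * u' x)
    (heq1 : ∀ x ∈ Set.Ioo (0:ℝ) L, Complex.I * (lam : ℂ) * u x - v x = f₁ x)
    (heq2 : ∀ x ∈ Set.Ioo (0:ℝ) L,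
      Complex.I * (lam : ℂ) * v x - S' x + (c x : ℂ) * z x = f₂ x)
    (heq3 : ∀ x ∈ Set.Ioo (0:ℝ) L, Complex.I * (lam : ℂ) * y x - z x = f₃ x)
    (heq4 : ∀ x ∈ Set.Ioo (0:ℝ) L,
      Complex.I * (lam : ℂ) * z x - y'' x - (c x : ℂ) * v x = f₄ x) :
    (∫ x in (0:ℝ)..L,
        h' x * (a⁻¹ * ‖S x‖ ^ 2 + ‖v x‖ ^ 2 + ‖z x‖ ^ 2 + ‖y' x‖ ^ 2))
      - (h L * (a⁻¹ * ‖S L‖ ^ 2 + ‖y' L‖ ^ 2)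
          - h 0 * (a⁻¹ * ‖S 0‖ ^ 2 + ‖y' 0‖ ^ 2))
      - ((2 : ℂ) * ∫ x in (0:ℝ)..L,
          (c x : ℂ) * (h x : ℂ) * v x * (starRingEnd ℂ) (y' x)).re
      + (((2 / a : ℝ) : ℂ) * ∫ x in (0:ℝ)..L,
          (c x : ℂ) * (h x : ℂ) * z x * (starRingEnd ℂ) (S x)).re
      + ((2 : ℂ) * Complex.I * (lam : ℂ) / (a : ℂ) * ∫ x in (0:ℝ)..β,
          (h x : ℂ) * v x
            * ((κ₁ : ℂ) * (starRingEnd ℂ) (v' x) + (κ₂ : ℂ) * (starRingEnd ℂ) (w x))).re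
    = ((2 : ℂ) * ∫ x in (0:ℝ)..L, (h x : ℂ) * (starRingEnd ℂ) (f₁' x) * v x).re
      + (((2 / a : ℝ) : ℂ) * ∫ x in (0:ℝ)..L,
          (h x : ℂ) * f₂ x * (starRingEnd ℂ) (S x)).re
      + ((2 : ℂ) * ∫ x in (0:ℝ)..L, (h x : ℂ) * (starRingEnd ℂ) (f₃' x) * z x).re
      + ((2 : ℂ) * ∫ x in (0:ℝ)..L, (h x : ℂ) * f₄ x * (starRingEnd ℂ) (y' x)).re := by
  have hβ : β ∈ Icc 0 L := ⟨by linarith, by linarith⟩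
  have hL : 0 ≤ L := hβ.1.trans hβ.2
  have e₁ := eqOn_Ioo_of_hasDerivAt heq1 (fun x hx => ((hu x hx).const_mul _).sub (hv x hx)) hf₁
  have e₃ := eqOn_Ioo_of_hasDerivAt heq3 (fun x hx => ((hy x hx).const_mul _).sub (hz x hx)) hf₃
  have hSc := HasDerivAt.continuousOn hS
  have hvc := HasDerivAt.continuousOn hv
  have hzc := HasDerivAt.continuousOn hz
  have hy'c := HasDerivAt.continuousOn hy'
  have hhc := HasDerivAt.continuousOn hh
  have hβc : ContinuousOn (fun x => (h x : ℂ) * v x *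
      ((κ₁ : ℂ) * conj (v' x) + (κ₂ : ℂ) * conj (w x))) [[0, β]] := by
    have hsub : Icc 0 β ⊆ Icc 0 L := Icc_subset_Icc_right hβ.2
    have := hhc.mono hsub; have := hvc.mono hsub; have := hv'c.mono hsub
    rw [uIcc_of_le hβ.1]; fun_prop
  rw [integral_deriv_mul_energy hL hh hh'c hS hS'c hv hv'c hz hz'c hy' hy''c hv0 hvL hz0 hzL]
  rw [← uIcc_of_le hL] at hSc hvc hzc hy'c hhc hh'c hv'c hz'c hy''c hS'c hf₁'c hf₂c hf₃'c hf₄c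
  have hcI := intervalIntegrable_ofReal_ite (μ := volume) (a := 0) (b := L) hc
  have hhC : ContinuousOn (fun x => (h x : ℂ)) [[0, L]] := by fun_prop
  linarith [integral_multiplier_identity (h := h) ha.ne' hβ e₁ heq2 e₃ heq4 hS1 hS2
    (((hcI.mul_continuousOn hhC).mul_continuousOn hvc).mul_continuousOn hy'c.star)
    (((hcI.mul_continuousOn hhC).mul_continuousOn hzc).mul_continuousOn hSc.star)
    hβc.intervalIntegrable (ContinuousOn.intervalIntegrable (by fun_prop))
    (ContinuousOn.intervalIntegrable (by fun_prop)) (ContinuousOn.intervalIntegrable (by fun_prop))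
    (ContinuousOn.intervalIntegrable (by fun_prop)) (ContinuousOn.intervalIntegrable (by fun_prop))]

/-- The general multiplier identity (Lemma 3.8 / 4.5) for the resolvent system of
the coupled wave equations, with `c(x) = c₀` on `(α,γ)` and `0` elsewhere, and total
stress `S = au′ + κ₁v′ + κ₂w` on `(0,β)`, `S = au′` on `(β,L)`. -/
theorem stmt_9 (L α β γ a c₀ κ₁ κ₂ lam : ℝ)
    (hα : 0 < α) (hαβ : α < β) (hβγ : β < γ) (hγL : γ < L)
    (ha : 0 < a) (hc₀ : 0 < c₀) (hκ₁ : 0 < κ₁) (hκ₂ : κ₂ ≠ 0)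
    (c : ℝ → ℝ) (hc : ∀ x, c x = if α < x ∧ x < γ then c₀ else 0)
    (h h' : ℝ → ℝ)
    (hh : ∀ x ∈ Set.Icc (0:ℝ) L, HasDerivAt h (h' x) x)
    (hh'c : ContinuousOn h' (Set.Icc 0 L))
    (u u' : ℝ → ℂ)
    (hu : ∀ x ∈ Set.Icc (0:ℝ) L, HasDerivAt u (u' x) x)
    (v v' z z' f₁ f₁' f₃ f₃' : ℝ → ℂ)
    (hv : ∀ x ∈ Set.Icc (0:ℝ) L, HasDerivAt v (v' x) x)
    (hv'c : ContinuousOn v' (Set.Icc 0 L))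
    (hz : ∀ x ∈ Set.Icc (0:ℝ) L, HasDerivAt z (z' x) x)
    (hz'c : ContinuousOn z' (Set.Icc 0 L))
    (hf₁ : ∀ x ∈ Set.Icc (0:ℝ) L, HasDerivAt f₁ (f₁' x) x)
    (hf₁'c : ContinuousOn f₁' (Set.Icc 0 L))
    (hf₃ : ∀ x ∈ Set.Icc (0:ℝ) L, HasDerivAt f₃ (f₃' x) x)
    (hf₃'c : ContinuousOn f₃' (Set.Icc 0 L))
    (hv0 : v 0 = 0) (hvL : v L = 0) (hz0 : z 0 = 0) (hzL : z L = 0)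
    (y y' y'' : ℝ → ℂ)
    (hy : ∀ x ∈ Set.Icc (0:ℝ) L, HasDerivAt y (y' x) x)
    (hy' : ∀ x ∈ Set.Icc (0:ℝ) L, HasDerivAt y' (y'' x) x)
    (hy''c : ContinuousOn y'' (Set.Icc 0 L))
    (f₂ f₄ : ℝ → ℂ)
    (hf₂c : ContinuousOn f₂ (Set.Icc 0 L)) (hf₄c : ContinuousOn f₄ (Set.Icc 0 L))
    (w : ℝ → ℂ) (hwc : ContinuousOn w (Set.Icc 0 β))
    (S S' : ℝ → ℂ)
    (hS : ∀ x ∈ Set.Icc (0:ℝ) L, HasDerivAt S (S' x) x)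
    (hS'c : ContinuousOn S' (Set.Icc 0 L))
    (hS1 : ∀ x ∈ Set.Ioo (0:ℝ) β,
      S x = (a : ℂ) * u' x + (κ₁ : ℂ) * v' x + (κ₂ : ℂ) * w x)
    (hS2 : ∀ x ∈ Set.Ioo β L, S x = (a : ℂ) * u' x)
    (heq1 : ∀ x ∈ Set.Ioo (0:ℝ) L, Complex.I * (lam : ℂ) * u x - v x = f₁ x)
    (heq2 : ∀ x ∈ Set.Ioo (0:ℝ) L,
      Complex.I * (lam : ℂ) * v x - S' x + (c x : ℂ) * z x = f₂ x)
    (heq3 : ∀ x ∈ Set.Ioo (0:ℝ) L, Complex.I * (lam : ℂ) * y x - z x = f₃ x)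
    (heq4 : ∀ x ∈ Set.Ioo (0:ℝ) L,
      Complex.I * (lam : ℂ) * z x - y'' x - (c x : ℂ) * v x = f₄ x) :
    (∫ x in (0:ℝ)..L,
        h' x * (a⁻¹ * ‖S x‖ ^ 2 + ‖v x‖ ^ 2 + ‖z x‖ ^ 2 + ‖y' x‖ ^ 2))
      - (h L * (a⁻¹ * ‖S L‖ ^ 2 + ‖y' L‖ ^ 2)
          - h 0 * (a⁻¹ * ‖S 0‖ ^ 2 + ‖y' 0‖ ^ 2))
      - ((2 : ℂ) * ∫ x in (0:ℝ)..L,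
          (c x : ℂ) * (h x : ℂ) * v x * (starRingEnd ℂ) (y' x)).re
      + (((2 / a : ℝ) : ℂ) * ∫ x in (0:ℝ)..L,
          (c x : ℂ) * (h x : ℂ) * z x * (starRingEnd ℂ) (S x)).re
      + ((2 : ℂ) * Complex.I * (lam : ℂ) / (a : ℂ) * ∫ x in (0:ℝ)..β,
          (h x : ℂ) * v x
            * ((κ₁ : ℂ) * (starRingEnd ℂ) (v' x) + (κ₂ : ℂ) * (starRingEnd ℂ) (w x))).re
    = ((2 : ℂ) * ∫ x in (0:ℝ)..L, (h x : ℂ) * (starRingEnd ℂ) (f₁' x) * v x).re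
      + (((2 / a : ℝ) : ℂ) * ∫ x in (0:ℝ)..L,
          (h x : ℂ) * f₂ x * (starRingEnd ℂ) (S x)).re
      + ((2 : ℂ) * ∫ x in (0:ℝ)..L, (h x : ℂ) * (starRingEnd ℂ) (f₃' x) * z x).re
      + ((2 : ℂ) * ∫ x in (0:ℝ)..L, (h x : ℂ) * f₄ x * (starRingEnd ℂ) (y' x)).re :=
  stmt_9_general L α β γ a c₀ κ₁ κ₂ lam hα hαβ hβγ hγL ha c hc h h' hh hh'c u u' hu v v' z z' f₁ f₁'
    f₃ f₃' hv hv'c hz hz'c hf₁ hf₁'c hf₃ hf₃'c hv0 hvL hz0 hzL y y' y'' hy hy' hy''c f₂ f₄ hf₂c hf₄c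
    w hwc S S' hS hS'c hS1 hS2 heq1 heq2 heq3 heq4
end

section
/- Let 0 < α < γ < L, c₀ > 0, λ ∈ ℝ \ {0}, and let θ : [0,L] → ℝ be continuously differentiable. Let v, S : [0,L] → ℂ be continuously differentiable with v(0) = v(L) = 0, and let z, f : [0,L] → ℂ be continuous, satisfying i λ v(x) − S′(x) + c(x) z(x) = f(x) for all x ∈ (0,L). Then ∫₀^L θ |v|² dx = −Im( λ⁻¹ ∫₀^L (θ′ v̄ + θ v̄′) S dx ) − Im( λ⁻¹ ∫₀^L c(·) θ z v̄ dx ) + Im( λ⁻¹ ∫₀^L θ f v̄ dx ). -/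
open MeasureTheory Complex

/-- Cut-off multiplier identity for the velocity `v`: multiplying the resolvent
equation `iλv − S′ + cz = f` by `λ⁻¹θv̄`, integrating by parts and taking imaginary
parts, where `c(x) = c₀` on `(α,γ)` and `0` elsewhere. -/
theorem stmt_10 (L α γ c₀ lam : ℝ)
    (hα : 0 < α) (hαγ : α < γ) (hγL : γ < L) (hc₀ : 0 < c₀) (hlam : lam ≠ 0)
    (c : ℝ → ℝ) (hc : ∀ x, c x = if α < x ∧ x < γ then c₀ else 0)
    (θ θ' : ℝ → ℝ)
    (hθ : ∀ x ∈ Set.Icc (0:ℝ) L, HasDerivAt θ (θ' x) x)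
    (hθ'c : ContinuousOn θ' (Set.Icc 0 L))
    (v v' S S' : ℝ → ℂ)
    (hv : ∀ x ∈ Set.Icc (0:ℝ) L, HasDerivAt v (v' x) x)
    (hv'c : ContinuousOn v' (Set.Icc 0 L))
    (hS : ∀ x ∈ Set.Icc (0:ℝ) L, HasDerivAt S (S' x) x)
    (hS'c : ContinuousOn S' (Set.Icc 0 L))
    (hv0 : v 0 = 0) (hvL : v L = 0)
    (z f : ℝ → ℂ)
    (hzc : ContinuousOn z (Set.Icc 0 L)) (hfc : ContinuousOn f (Set.Icc 0 L))
    (heq : ∀ x ∈ Set.Ioo (0:ℝ) L,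
      Complex.I * (lam : ℂ) * v x - S' x + (c x : ℂ) * z x = f x) :
    ∫ x in (0:ℝ)..L, θ x * ‖v x‖ ^ 2
      = -((lam : ℂ)⁻¹ * ∫ x in (0:ℝ)..L,
            ((θ' x : ℂ) * (starRingEnd ℂ) (v x)
              + (θ x : ℂ) * (starRingEnd ℂ) (v' x)) * S x).im
        - ((lam : ℂ)⁻¹ * ∫ x in (0:ℝ)..L,
            (c x : ℂ) * (θ x : ℂ) * z x * (starRingEnd ℂ) (v x)).im
        + ((lam : ℂ)⁻¹ * ∫ x in (0:ℝ)..L,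
            (θ x : ℂ) * f x * (starRingEnd ℂ) (v x)).im := by
  have h0L : (0:ℝ) ≤ L := le_of_lt (lt_trans hα (lt_trans hαγ hγL))
  have huIcc : Set.uIcc (0:ℝ) L = Set.Icc 0 L := Set.uIcc_of_le h0L
  -- continuity facts
  have hθcont : ContinuousOn θ (Set.Icc 0 L) :=
    fun x hx => (hθ x hx).continuousAt.continuousWithinAt
  have hvcont : ContinuousOn v (Set.Icc 0 L) :=
    fun x hx => (hv x hx).continuousAt.continuousWithinAt
  have hScont : ContinuousOn S (Set.Icc 0 L) :=
    fun x hx => (hS x hx).continuousAt.continuousWithinAt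
  have hθC : ContinuousOn (fun x => (θ x : ℂ)) (Set.Icc 0 L) :=
    Complex.continuous_ofReal.comp_continuousOn hθcont
  have hθ'C : ContinuousOn (fun x => (θ' x : ℂ)) (Set.Icc 0 L) :=
    Complex.continuous_ofReal.comp_continuousOn hθ'c
  have hcv : ContinuousOn (fun x => (starRingEnd ℂ) (v x)) (Set.Icc 0 L) := hvcont.star
  have hcv' : ContinuousOn (fun x => (starRingEnd ℂ) (v' x)) (Set.Icc 0 L) := hv'c.star
  -- integrability facts
  have hintA : IntervalIntegrable (fun x =>
      ((θ' x : ℂ) * (starRingEnd ℂ) (v x) + (θ x : ℂ) * (starRingEnd ℂ) (v' x)) * S x)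
      volume 0 L := by
    apply ContinuousOn.intervalIntegrable
    rw [huIcc]
    exact ((hθ'C.mul hcv).add (hθC.mul hcv')).mul hScont
  have hintB : IntervalIntegrable (fun x => (θ x : ℂ) * (starRingEnd ℂ) (v x) * S' x)
      volume 0 L := by
    apply ContinuousOn.intervalIntegrable
    rw [huIcc]
    exact (hθC.mul hcv).mul hS'c
  have hintC : IntervalIntegrable (fun x => (c x : ℂ) * (θ x : ℂ) * z x * (starRingEnd ℂ) (v x))
      volume 0 L := by
    have hfun : (fun x => (c x : ℂ) * (θ x : ℂ) * z x * (starRingEnd ℂ) (v x))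
        = Set.indicator (Set.Ioo α γ)
            (fun x => (c₀ : ℂ) * (θ x : ℂ) * z x * (starRingEnd ℂ) (v x)) := by
      funext x
      rw [hc x]
      by_cases hx : α < x ∧ x < γ
      · simp [Set.indicator, Set.mem_Ioo, hx]
      · simp [Set.indicator, Set.mem_Ioo, hx]
    have hbase : IntervalIntegrable
        (fun x => (c₀ : ℂ) * (θ x : ℂ) * z x * (starRingEnd ℂ) (v x)) volume 0 L := by
      apply ContinuousOn.intervalIntegrable
      rw [huIcc]
      exact (((continuousOn_const.mul hθC).mul hzc).mul hcv)
    rw [hfun, intervalIntegrable_iff]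
    rw [intervalIntegrable_iff] at hbase
    exact hbase.indicator measurableSet_Ioo
  have hintT : IntervalIntegrable (fun x => ((θ x * ‖v x‖ ^ 2 : ℝ) : ℂ)) volume 0 L := by
    apply ContinuousOn.intervalIntegrable
    rw [huIcc]
    exact Complex.continuous_ofReal.comp_continuousOn
      (hθcont.mul ((hvcont.norm).pow 2))
  -- integration by parts: A + B = 0
  have hIBP : (∫ x in (0:ℝ)..L,
        ((θ' x : ℂ) * (starRingEnd ℂ) (v x) + (θ x : ℂ) * (starRingEnd ℂ) (v' x)) * S x)
      + (∫ x in (0:ℝ)..L, (θ x : ℂ) * (starRingEnd ℂ) (v x) * S' x) = 0 := by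
    have hderiv : ∀ x ∈ Set.uIcc (0:ℝ) L,
        HasDerivAt (fun y => (θ y : ℂ) * (starRingEnd ℂ) (v y) * S y)
          (((θ' x : ℂ) * (starRingEnd ℂ) (v x) + (θ x : ℂ) * (starRingEnd ℂ) (v' x)) * S x
            + (θ x : ℂ) * (starRingEnd ℂ) (v x) * S' x) x := by
      intro x hx
      rw [huIcc] at hx
      have h1 : HasDerivAt (fun y => (θ y : ℂ)) ((θ' x : ℂ)) x := (hθ x hx).ofReal_comp
      have h2 : HasDerivAt (fun y => (starRingEnd ℂ) (v y)) ((starRingEnd ℂ) (v' x)) x := by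
        simpa only [starRingEnd_apply] using (hv x hx).star
      exact ((h1.mul h2).mul (hS x hx))
    have := intervalIntegral.integral_eq_sub_of_hasDerivAt hderiv (hintA.add hintB)
    rw [intervalIntegral.integral_add hintA hintB] at this
    rw [this, hv0, hvL]
    simp
  -- the pointwise equation: multiply by θ v̄
  have hptwise : ∀ᵐ x ∂volume, x ∈ Set.uIoc (0:ℝ) L →
      (θ x : ℂ) * f x * (starRingEnd ℂ) (v x)
        = Complex.I * (lam : ℂ) * ((θ x * ‖v x‖ ^ 2 : ℝ) : ℂ)
          - (θ x : ℂ) * (starRingEnd ℂ) (v x) * S' x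
          + (c x : ℂ) * (θ x : ℂ) * z x * (starRingEnd ℂ) (v x) := by
    filter_upwards [measure_eq_zero_iff_ae_notMem.mp (MeasureTheory.measure_singleton L)] with x hxL hx
    rw [Set.uIoc_of_le h0L] at hx
    have hxIoo : x ∈ Set.Ioo (0:ℝ) L := ⟨hx.1, lt_of_le_of_ne hx.2 hxL⟩
    rw [← heq x hxIoo]
    have hvconj : v x * (starRingEnd ℂ) (v x) = ((‖v x‖ : ℝ) : ℂ) ^ 2 := RCLike.mul_conj (v x)
    push_cast
    rw [← hvconj]
    ring
  have hFeq : (∫ x in (0:ℝ)..L, (θ x : ℂ) * f x * (starRingEnd ℂ) (v x))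
      = Complex.I * (lam : ℂ) * ((∫ x in (0:ℝ)..L, θ x * ‖v x‖ ^ 2 : ℝ) : ℂ)
        - (∫ x in (0:ℝ)..L, (θ x : ℂ) * (starRingEnd ℂ) (v x) * S' x)
        + (∫ x in (0:ℝ)..L, (c x : ℂ) * (θ x : ℂ) * z x * (starRingEnd ℂ) (v x)) := by
    rw [intervalIntegral.integral_congr_ae hptwise]
    rw [intervalIntegral.integral_add (((hintT.const_mul _).sub hintB)) hintC,
      intervalIntegral.integral_sub (hintT.const_mul _) hintB,
      intervalIntegral.integral_const_mul, intervalIntegral.integral_ofReal]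
  -- finish: take imaginary parts
  set T : ℝ := ∫ x in (0:ℝ)..L, θ x * ‖v x‖ ^ 2 with hT
  set A : ℂ := ∫ x in (0:ℝ)..L,
      ((θ' x : ℂ) * (starRingEnd ℂ) (v x) + (θ x : ℂ) * (starRingEnd ℂ) (v' x)) * S x with hA
  set B : ℂ := ∫ x in (0:ℝ)..L, (θ x : ℂ) * (starRingEnd ℂ) (v x) * S' x with hB
  set C : ℂ := ∫ x in (0:ℝ)..L, (c x : ℂ) * (θ x : ℂ) * z x * (starRingEnd ℂ) (v x) with hC
  have hBA : B = -A := by linear_combination hIBP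
  have hF : (lam : ℂ)⁻¹ * (∫ x in (0:ℝ)..L, (θ x : ℂ) * f x * (starRingEnd ℂ) (v x))
      = Complex.I * (T : ℂ) + (lam : ℂ)⁻¹ * A + (lam : ℂ)⁻¹ * C := by
    rw [hFeq, hBA]
    have hlamC : (lam : ℂ) ≠ 0 := Complex.ofReal_ne_zero.mpr hlam
    field_simp
    ring
  rw [hF]
  have hIm : (Complex.I * (T : ℂ) + (lam : ℂ)⁻¹ * A + (lam : ℂ)⁻¹ * C).im
      = T + ((lam : ℂ)⁻¹ * A).im + ((lam : ℂ)⁻¹ * C).im := by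
    simp [Complex.add_im, Complex.mul_im]
  rw [hIm]
  ring
end

section
/- Let 0 < α < γ < L, c₀ > 0, λ ∈ ℝ \ {0}, and let θ : [0,L] → ℝ be continuously differentiable. Let z, g₃ : [0,L] → ℂ be continuously differentiable with z(0) = z(L) = 0, let y : [0,L] → ℂ be twice continuously differentiable, and let v, g₄ : [0,L] → ℂ be continuous, satisfying on (0,L): i λ y − z = g₃ and i λ z − y″ − c(·) v = g₄. Then ∫₀^L θ |y′|² dx = ∫₀^L θ |z|² dx + Im( λ⁻¹ ∫₀^L θ′ y′ z̄ dx ) − Im( λ⁻¹ ∫₀^L c(·) θ v z̄ dx ) − Im( λ⁻¹ ∫₀^L θ ḡ₃′ y′ dx ) − Im( λ⁻¹ ∫₀^L θ g₄ z̄ dx ). -/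
open MeasureTheory Complex

/-!
Put `F = θ y′ z̄`. Since `z` vanishes at both ends, `∫₀^L F′ = 0`. On `(0,L)` the resolvent
equations give `y″ = iλz − c v − g₄` and `z′ = iλy′ − g₃′`, so `F′` equals
`θ′ y′ z̄ + iλ θ |z|² − c θ v z̄ − θ ḡ₃′ y′ − θ g₄ z̄ − iλ θ |y′|²`.
Integrating, multiplying by `λ⁻¹` and taking imaginary parts isolates `∫ θ |y′|²`.
-/

open Set intervalIntegral ComplexConjugate

theorem intervalIntegrable_ofReal_of_eq_ite_Ioo {c : ℝ → ℝ} {α γ c₀ : ℝ}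
    (hc : ∀ x, c x = if α < x ∧ x < γ then c₀ else 0) (a b : ℝ) :
    IntervalIntegrable (fun x => (c x : ℂ)) volume a b := by
  have hind : (fun x => (c x : ℂ)) = (Ioo α γ).indicator fun _ => (c₀ : ℂ) := by
    ext x
    by_cases hx : α < x ∧ x < γ <;> simp [hc, hx]
  rw [hind]
  exact ((integrableOn_const (by simp)).integrable_indicator measurableSet_Ioo).intervalIntegrable

theorem multiplier_deriv_eq_of_resolvent {lam θ θ' c : ℝ} {y' y'' z z' v g₃' g₄ : ℂ}
    (hy'' : I * lam * z - y'' - c * v = g₄) (hz' : z' = I * lam * y' - g₃') :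
    (θ' * y' + θ * y'') * conj z + θ * y' * conj z'
      = θ' * y' * conj z + I * lam * ((θ * ‖z‖ ^ 2 : ℝ) : ℂ) - c * θ * v * conj z
        - θ * conj g₃' * y' - θ * g₄ * conj z - I * lam * ((θ * ‖y'‖ ^ 2 : ℝ) : ℂ) := by
  rw [hz', map_sub, map_mul, map_mul, conj_I, conj_ofReal]
  push_cast
  linear_combination (-θ * conj z) * hy'' + (I * lam * θ) * mul_conj' z
    - (I * lam * θ) * mul_conj' y'

theorem eq_add_im_inv_mul_of_add_I_mul_sub_eq_zero {lam a b : ℝ} {S : ℂ} (hlam : lam ≠ 0)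
    (h : S + I * lam * (b - a) = 0) : a = b + ((lam : ℂ)⁻¹ * S).im := by
  have hlam' : (lam : ℂ) ≠ 0 := ofReal_ne_zero.mpr hlam
  have hS : (lam : ℂ)⁻¹ * S = -I * (b - a) := by
    field_simp
    linear_combination h
  rw [hS]
  simp

theorem integral_eq_add_im_of_hasDerivAt {a b lam : ℝ} {F A B C D : ℝ → ℂ} {Y Z : ℝ → ℝ}
    (hab : a ≤ b) (hlam : lam ≠ 0) (hF : ContinuousOn F (Icc a b)) (hFab : F a = F b)
    (hderiv : ∀ x ∈ Ioo a b,
      HasDerivAt F (A x + I * lam * Z x - B x - C x - D x - I * lam * Y x) x)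
    (hA : IntervalIntegrable A volume a b) (hB : IntervalIntegrable B volume a b)
    (hC : IntervalIntegrable C volume a b) (hD : IntervalIntegrable D volume a b)
    (hY : IntervalIntegrable (fun x => (Y x : ℂ)) volume a b)
    (hZ : IntervalIntegrable (fun x => (Z x : ℂ)) volume a b) :
    ∫ x in a..b, Y x
      = (∫ x in a..b, Z x) + ((lam : ℂ)⁻¹ * ∫ x in a..b, A x).im
        - ((lam : ℂ)⁻¹ * ∫ x in a..b, B x).im - ((lam : ℂ)⁻¹ * ∫ x in a..b, C x).im
        - ((lam : ℂ)⁻¹ * ∫ x in a..b, D x).im := by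
  have hAZ := hA.add (hZ.const_mul (I * lam))
  have hFTC := integral_eq_sub_of_hasDerivAt_of_le hab hF hderiv
    ((((hAZ.sub hB).sub hC).sub hD).sub (hY.const_mul _))
  rw [integral_sub (((hAZ.sub hB).sub hC).sub hD) (hY.const_mul _),
    integral_sub ((hAZ.sub hB).sub hC) hD, integral_sub (hAZ.sub hB) hC, integral_sub hAZ hB,
    integral_add hA (hZ.const_mul _), intervalIntegral.integral_const_mul,
    intervalIntegral.integral_const_mul, intervalIntegral.integral_ofReal,
    intervalIntegral.integral_ofReal, hFab, sub_self] at hFTC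
  rw [eq_add_im_inv_mul_of_add_I_mul_sub_eq_zero (a := ∫ x in a..b, Y x) (b := ∫ x in a..b, Z x)
    (S := (∫ x in a..b, A x) - (∫ x in a..b, B x) - (∫ x in a..b, C x) - (∫ x in a..b, D x))
    hlam (by linear_combination hFTC)]
  simp only [mul_sub, sub_im]
  ring

theorem stmt_12_general (L α γ c₀ lam : ℝ)
    (hα : 0 < α) (hαγ : α < γ) (hγL : γ < L) (hlam : lam ≠ 0)
    (c : ℝ → ℝ) (hc : ∀ x, c x = if α < x ∧ x < γ then c₀ else 0)
    (θ θ' : ℝ → ℝ)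
    (hθ : ∀ x ∈ Set.Icc (0:ℝ) L, HasDerivAt θ (θ' x) x)
    (hθ'c : ContinuousOn θ' (Set.Icc 0 L))
    (z z' g₃ g₃' : ℝ → ℂ)
    (hz : ∀ x ∈ Set.Icc (0:ℝ) L, HasDerivAt z (z' x) x)
    (hg₃ : ∀ x ∈ Set.Icc (0:ℝ) L, HasDerivAt g₃ (g₃' x) x)
    (hg₃'c : ContinuousOn g₃' (Set.Icc 0 L))
    (hz0 : z 0 = 0) (hzL : z L = 0)
    (y y' y'' : ℝ → ℂ)
    (hy : ∀ x ∈ Set.Icc (0:ℝ) L, HasDerivAt y (y' x) x)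
    (hy' : ∀ x ∈ Set.Icc (0:ℝ) L, HasDerivAt y' (y'' x) x)
    (v g₄ : ℝ → ℂ)
    (hvc : ContinuousOn v (Set.Icc 0 L)) (hg₄c : ContinuousOn g₄ (Set.Icc 0 L))
    (heq3 : ∀ x ∈ Set.Ioo (0:ℝ) L, Complex.I * (lam : ℂ) * y x - z x = g₃ x)
    (heq4 : ∀ x ∈ Set.Ioo (0:ℝ) L,
      Complex.I * (lam : ℂ) * z x - y'' x - (c x : ℂ) * v x = g₄ x) :
    ∫ x in (0:ℝ)..L, θ x * ‖y' x‖ ^ 2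
      = (∫ x in (0:ℝ)..L, θ x * ‖z x‖ ^ 2)
        + ((lam : ℂ)⁻¹ * ∫ x in (0:ℝ)..L,
            (θ' x : ℂ) * y' x * (starRingEnd ℂ) (z x)).im
        - ((lam : ℂ)⁻¹ * ∫ x in (0:ℝ)..L,
            (c x : ℂ) * (θ x : ℂ) * v x * (starRingEnd ℂ) (z x)).im
        - ((lam : ℂ)⁻¹ * ∫ x in (0:ℝ)..L,
            (θ x : ℂ) * (starRingEnd ℂ) (g₃' x) * y' x).im
        - ((lam : ℂ)⁻¹ * ∫ x in (0:ℝ)..L,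
            (θ x : ℂ) * g₄ x * (starRingEnd ℂ) (z x)).im := by
  have hL : (0:ℝ) ≤ L := by linarith
  have hθc : ContinuousOn θ (Icc 0 L) := fun x hx => (hθ x hx).continuousAt.continuousWithinAt
  have hzc : ContinuousOn z (Icc 0 L) := fun x hx => (hz x hx).continuousAt.continuousWithinAt
  have hy'c : ContinuousOn y' (Icc 0 L) := fun x hx => (hy' x hx).continuousAt.continuousWithinAt
  have hB : IntervalIntegrable (fun x => (c x : ℂ) * (θ x : ℂ) * v x * conj (z x)) volume 0 L := by
    simpa only [mul_assoc] using (intervalIntegrable_ofReal_of_eq_ite_Ioo hc 0 L).mul_continuousOn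
      (g := fun x => (θ x : ℂ) * (v x * conj (z x))) (by rw [uIcc_of_le hL]; fun_prop)
  have hint {f : ℝ → ℂ} (hf : ContinuousOn f (Icc 0 L)) : IntervalIntegrable f volume 0 L :=
    hf.intervalIntegrable_of_Icc hL
  refine integral_eq_add_im_of_hasDerivAt (F := fun t => (θ t : ℂ) * y' t * conj (z t)) hL hlam
    (by fun_prop) (by simp [hz0, hzL]) (fun x hx => ?_) (hint (by fun_prop)) hB
    (hint (by fun_prop)) (hint (by fun_prop)) (hint (by fun_prop)) (hint (by fun_prop))
  have hx' := Ioo_subset_Icc_self hx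
  have hz' : z' x = I * lam * y' x - g₃' x := by
    refine (hz x hx').unique
      ((((hy x hx').const_mul (I * lam)).sub (hg₃ x hx')).congr_of_eventuallyEq ?_)
    filter_upwards [Ioo_mem_nhds hx.1 hx.2] with t ht
    show z t = I * lam * y t - g₃ t
    linear_combination -heq3 t ht
  exact (((hθ x hx').ofReal_comp.mul (hy' x hx')).mul (hz x hx').star).congr_deriv
    (multiplier_deriv_eq_of_resolvent (heq4 x hx) hz')

/-- Cut-off multiplier identity transferring the estimate on `z` to an estimate on
`y′`, where `c(x) = c₀` on `(α,γ)` and `0` elsewhere. -/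
theorem stmt_12 (L α γ c₀ lam : ℝ)
    (hα : 0 < α) (hαγ : α < γ) (hγL : γ < L) (hc₀ : 0 < c₀) (hlam : lam ≠ 0)
    (c : ℝ → ℝ) (hc : ∀ x, c x = if α < x ∧ x < γ then c₀ else 0)
    (θ θ' : ℝ → ℝ)
    (hθ : ∀ x ∈ Set.Icc (0:ℝ) L, HasDerivAt θ (θ' x) x)
    (hθ'c : ContinuousOn θ' (Set.Icc 0 L))
    (z z' g₃ g₃' : ℝ → ℂ)
    (hz : ∀ x ∈ Set.Icc (0:ℝ) L, HasDerivAt z (z' x) x)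
    (hz'c : ContinuousOn z' (Set.Icc 0 L))
    (hg₃ : ∀ x ∈ Set.Icc (0:ℝ) L, HasDerivAt g₃ (g₃' x) x)
    (hg₃'c : ContinuousOn g₃' (Set.Icc 0 L))
    (hz0 : z 0 = 0) (hzL : z L = 0)
    (y y' y'' : ℝ → ℂ)
    (hy : ∀ x ∈ Set.Icc (0:ℝ) L, HasDerivAt y (y' x) x)
    (hy' : ∀ x ∈ Set.Icc (0:ℝ) L, HasDerivAt y' (y'' x) x)
    (hy''c : ContinuousOn y'' (Set.Icc 0 L))
    (v g₄ : ℝ → ℂ)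
    (hvc : ContinuousOn v (Set.Icc 0 L)) (hg₄c : ContinuousOn g₄ (Set.Icc 0 L))
    (heq3 : ∀ x ∈ Set.Ioo (0:ℝ) L, Complex.I * (lam : ℂ) * y x - z x = g₃ x)
    (heq4 : ∀ x ∈ Set.Ioo (0:ℝ) L,
      Complex.I * (lam : ℂ) * z x - y'' x - (c x : ℂ) * v x = g₄ x) :
    ∫ x in (0:ℝ)..L, θ x * ‖y' x‖ ^ 2
      = (∫ x in (0:ℝ)..L, θ x * ‖z x‖ ^ 2)
        + ((lam : ℂ)⁻¹ * ∫ x in (0:ℝ)..L,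
            (θ' x : ℂ) * y' x * (starRingEnd ℂ) (z x)).im
        - ((lam : ℂ)⁻¹ * ∫ x in (0:ℝ)..L,
            (c x : ℂ) * (θ x : ℂ) * v x * (starRingEnd ℂ) (z x)).im
        - ((lam : ℂ)⁻¹ * ∫ x in (0:ℝ)..L,
            (θ x : ℂ) * (starRingEnd ℂ) (g₃' x) * y' x).im
        - ((lam : ℂ)⁻¹ * ∫ x in (0:ℝ)..L,
            (θ x : ℂ) * g₄ x * (starRingEnd ℂ) (z x)).im :=
  stmt_12_general L α γ c₀ lam hα hαγ hγL hlam c hc θ θ' hθ hθ'c z z' g₃ g₃' hz hg₃ hg₃'c hz0 hzL y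
    y' y'' hy hy' v g₄ hvc hg₄c heq3 heq4
end

section
/- Let 0 < α < β, c₀ > 0, λ ∈ ℝ. Let S, y, z, f³ : [α,β] → ℂ be continuously differentiable and v, f² : [α,β] → ℂ continuous, satisfying on (α,β): i λ v − S′ + c₀ z = f² and i λ y − z = f³. Then c₀ ∫_α^β |z|² dx = Re( i λ ∫_α^β S ȳ′ dx ) + Re( ∫_α^β S \overline{f³′} dx ) + Re( S(β) z̄(β) − S(α) z̄(α) ) + Re( ∫_α^β f² z̄ dx ) − Re( i λ ∫_α^β v z̄ dx ). -/
/-!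
Multiply the first equation by `z̄` and integrate over `(α, β)`. Integrating `∫ S′ z̄` by parts
produces the boundary term and `∫ S z̄′`, and differentiating the second equation gives
`z̄′ = -iλ ȳ′ - f̄³′`. The resulting complex identity has the real left-hand side `c₀ ∫ |z|²`,
so it survives taking real parts.
-/

open MeasureTheory Complex Set ComplexConjugate

section
variable {a b : ℝ}

theorem eqOn_deriv_of_eqOn_Ioo {E : Type*} [NormedAddCommGroup E] [NormedSpace ℝ E]
    {f g f' g' : ℝ → E} (h : EqOn f g (Ioo a b))
    (hf : ∀ x ∈ Ioo a b, HasDerivAt f (f' x) x)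
    (hg : ∀ x ∈ Ioo a b, HasDerivAt g (g' x) x) :
    EqOn f' g' (Ioo a b) := fun x hx =>
  (hf x hx).unique <| (hg x hx).congr_of_eventuallyEq <|
    Filter.eventually_of_mem (Ioo_mem_nhds hx.1 hx.2) h

theorem ContinuousOn.intervalIntegrable_mul_conj {f g : ℝ → ℂ} (hab : a ≤ b)
    (hf : ContinuousOn f (Icc a b)) (hg : ContinuousOn g (Icc a b)) :
    IntervalIntegrable (fun x => f x * conj (g x)) volume a b :=
  (hf.mul (continuous_conj.comp_continuousOn hg)).intervalIntegrable_of_Icc hab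

theorem intervalIntegral.integral_mul_conj_self (z : ℝ → ℂ) :
    ∫ x in a..b, z x * conj (z x) = ((∫ x in a..b, ‖z x‖ ^ 2 : ℝ) : ℂ) := by
  simp_rw [mul_conj', ← ofReal_pow]
  exact intervalIntegral.integral_ofReal

theorem integral_deriv_mul_conj_of_resolvent {S' v z f : ℝ → ℂ} {lam c : ℝ} (hab : a ≤ b)
    (hv : ContinuousOn v (Icc a b)) (hz : ContinuousOn z (Icc a b))
    (hf : ContinuousOn f (Icc a b))
    (h : ∀ x ∈ Ioo a b, I * lam * v x - S' x + c * z x = f x) :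
    ∫ x in a..b, S' x * conj (z x) = I * lam * (∫ x in a..b, v x * conj (z x))
      + c * (∫ x in a..b, z x * conj (z x)) - ∫ x in a..b, f x * conj (z x) := by
  have hvz := (hv.intervalIntegrable_mul_conj hab hz).const_mul (I * lam)
  have hzz := (hz.intervalIntegrable_mul_conj hab hz).const_mul (c : ℂ)
  rw [intervalIntegral.integral_congr_Ioo_of_le hab (g := fun x =>
      I * lam * (v x * conj (z x)) + c * (z x * conj (z x)) - f x * conj (z x))
      fun x hx => by linear_combination -(h x hx) * conj (z x),
    intervalIntegral.integral_sub (hvz.add hzz) (hf.intervalIntegrable_mul_conj hab hz),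
    intervalIntegral.integral_add hvz hzz,
    intervalIntegral.integral_const_mul, intervalIntegral.integral_const_mul]

theorem integral_mul_conj_deriv_of_eqOn {S y' f' z' : ℝ → ℂ} {lam : ℝ} (hab : a ≤ b)
    (hS : ContinuousOn S (Icc a b)) (hy' : ContinuousOn y' (Icc a b))
    (hf' : ContinuousOn f' (Icc a b))
    (hz' : EqOn z' (fun x => I * lam * y' x - f' x) (Ioo a b)) :
    ∫ x in a..b, S x * conj (z' x)
      = -(I * lam) * (∫ x in a..b, S x * conj (y' x)) - ∫ x in a..b, S x * conj (f' x) := by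
  rw [intervalIntegral.integral_congr_Ioo_of_le hab
      (g := fun x => -(I * lam) * (S x * conj (y' x)) - S x * conj (f' x))
      fun x hx => by
        simp only [hz' hx, map_sub, map_mul, conj_I, conj_ofReal]; ring,
    intervalIntegral.integral_sub ((hS.intervalIntegrable_mul_conj hab hy').const_mul _)
      (hS.intervalIntegrable_mul_conj hab hf'), intervalIntegral.integral_const_mul]

end

theorem stmt_14_general (α β c₀ lam : ℝ) (hαβ : α < β)
    (S S' y y' z z' f₃ f₃' : ℝ → ℂ)
    (hS : ∀ x ∈ Set.Icc α β, HasDerivAt S (S' x) x)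
    (hS'c : ContinuousOn S' (Set.Icc α β))
    (hy : ∀ x ∈ Set.Icc α β, HasDerivAt y (y' x) x)
    (hy'c : ContinuousOn y' (Set.Icc α β))
    (hz : ∀ x ∈ Set.Icc α β, HasDerivAt z (z' x) x)
    (hz'c : ContinuousOn z' (Set.Icc α β))
    (hf₃ : ∀ x ∈ Set.Icc α β, HasDerivAt f₃ (f₃' x) x)
    (hf₃'c : ContinuousOn f₃' (Set.Icc α β))
    (v f₂ : ℝ → ℂ)
    (hvc : ContinuousOn v (Set.Icc α β)) (hf₂c : ContinuousOn f₂ (Set.Icc α β))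
    (heq2 : ∀ x ∈ Set.Ioo α β,
      Complex.I * (lam : ℂ) * v x - S' x + (c₀ : ℂ) * z x = f₂ x)
    (heq3 : ∀ x ∈ Set.Ioo α β, Complex.I * (lam : ℂ) * y x - z x = f₃ x) :
    c₀ * ∫ x in α..β, ‖z x‖ ^ 2
      = (Complex.I * (lam : ℂ) * ∫ x in α..β, S x * (starRingEnd ℂ) (y' x)).re
        + (∫ x in α..β, S x * (starRingEnd ℂ) (f₃' x)).re
        + (S β * (starRingEnd ℂ) (z β) - S α * (starRingEnd ℂ) (z α)).re
        + (∫ x in α..β, f₂ x * (starRingEnd ℂ) (z x)).re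
        - (Complex.I * (lam : ℂ) * ∫ x in α..β, v x * (starRingEnd ℂ) (z x)).re := by
  have hab := hαβ.le
  have hSc := continuousOn_of_forall_continuousAt fun x hx => (hS x hx).continuousAt
  have hzc := continuousOn_of_forall_continuousAt fun x hx => (hz x hx).continuousAt
  have hz' : EqOn z' (fun x => I * lam * y' x - f₃' x) (Ioo α β) :=
    eqOn_deriv_of_eqOn_Ioo (g := fun x => I * lam * y x - f₃ x)
      (fun x hx => by linear_combination -heq3 x hx)
      (fun x hx => hz x (Ioo_subset_Icc_self hx))
      fun x hx =>
        ((hy x (Ioo_subset_Icc_self hx)).const_mul _).sub (hf₃ x (Ioo_subset_Icc_self hx))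
  have ibp : ∫ x in α..β, S x * conj (z' x)
      = S β * conj (z β) - S α * conj (z α) - ∫ x in α..β, S' x * conj (z x) :=
    intervalIntegral.integral_mul_deriv_eq_deriv_mul (fun x hx => hS x (uIcc_of_le hab ▸ hx))
      (fun x hx => (hz x (uIcc_of_le hab ▸ hx)).star)
      (hS'c.intervalIntegrable_of_Icc hab) (hz'c.star.intervalIntegrable_of_Icc hab)
  have key : ((c₀ * ∫ x in α..β, ‖z x‖ ^ 2 : ℝ) : ℂ)
      = I * lam * (∫ x in α..β, S x * conj (y' x)) + (∫ x in α..β, S x * conj (f₃' x))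
        + (S β * conj (z β) - S α * conj (z α)) + (∫ x in α..β, f₂ x * conj (z x))
        - I * lam * ∫ x in α..β, v x * conj (z x) := by
    rw [ofReal_mul, ← intervalIntegral.integral_mul_conj_self]
    linear_combination ibp - integral_deriv_mul_conj_of_resolvent hab hvc hzc hf₂c heq2
      - integral_mul_conj_deriv_of_eqOn hab hSc hy'c hf₃'c hz'
  simpa only [ofReal_re, add_re, sub_re] using congrArg re key

/-- Identity expressing the localized `L²`-norm of `z` through the total stress `S`,
from the resolvent equations `iλv − S′ + c₀z = f²` and `iλy − z = f³` on `(α,β)`. -/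
theorem stmt_14 (α β c₀ lam : ℝ) (hα : 0 < α) (hαβ : α < β) (hc₀ : 0 < c₀)
    (S S' y y' z z' f₃ f₃' : ℝ → ℂ)
    (hS : ∀ x ∈ Set.Icc α β, HasDerivAt S (S' x) x)
    (hS'c : ContinuousOn S' (Set.Icc α β))
    (hy : ∀ x ∈ Set.Icc α β, HasDerivAt y (y' x) x)
    (hy'c : ContinuousOn y' (Set.Icc α β))
    (hz : ∀ x ∈ Set.Icc α β, HasDerivAt z (z' x) x)
    (hz'c : ContinuousOn z' (Set.Icc α β))
    (hf₃ : ∀ x ∈ Set.Icc α β, HasDerivAt f₃ (f₃' x) x)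
    (hf₃'c : ContinuousOn f₃' (Set.Icc α β))
    (v f₂ : ℝ → ℂ)
    (hvc : ContinuousOn v (Set.Icc α β)) (hf₂c : ContinuousOn f₂ (Set.Icc α β))
    (heq2 : ∀ x ∈ Set.Ioo α β,
      Complex.I * (lam : ℂ) * v x - S' x + (c₀ : ℂ) * z x = f₂ x)
    (heq3 : ∀ x ∈ Set.Ioo α β, Complex.I * (lam : ℂ) * y x - z x = f₃ x) :
    c₀ * ∫ x in α..β, ‖z x‖ ^ 2
      = (Complex.I * (lam : ℂ) * ∫ x in α..β, S x * (starRingEnd ℂ) (y' x)).re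
        + (∫ x in α..β, S x * (starRingEnd ℂ) (f₃' x)).re
        + (S β * (starRingEnd ℂ) (z β) - S α * (starRingEnd ℂ) (z α)).re
        + (∫ x in α..β, f₂ x * (starRingEnd ℂ) (z x)).re
        - (Complex.I * (lam : ℂ) * ∫ x in α..β, v x * (starRingEnd ℂ) (z x)).re :=
  stmt_14_general α β c₀ lam hαβ S S' y y' z z' f₃ f₃' hS hS'c hy hy'c hz hz'c hf₃ hf₃'c v f₂ hvc
    hf₂c heq2 heq3
end

section
/- Let p < q be real numbers, let g : [p,q] → ℝ be continuously differentiable with g(p) = 1 and g(q) = −1, and set M_g = max_{[p,q]} |g| and M_{g′} = max_{[p,q]} |g′|. Let λ ∈ ℝ, c₀ > 0, let y : [p,q] → ℂ be twice continuously differentiable, let z, g₃ : [p,q] → ℂ be continuously differentiable, and let v, g₄ : [p,q] → ℂ be continuous, satisfying on (p,q): i λ y′(x) − z′(x) = g₃′(x) and i λ z(x) − y″(x) − c₀ v(x) = g₄(x). Then |z(q)|² + |z(p)|² + |y′(q)|² + |y′(p)|² ≤ M_{g′} ∫_p^q (|z|² + |y′|²) dx + 2 c₀ M_g (∫_p^q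 |v|² dx)^{1/2} (∫_p^q |y′|² dx)^{1/2} + 2 M_g (∫_p^q |g₃′|² dx)^{1/2} (∫_p^q |z|² dx)^{1/2} + 2 M_g (∫_p^q |g₄|² dx)^{1/2} (∫_p^q |y′|² dx)^{1/2}. -/
/-!
Differentiate `g (|z|² + |y'|²)`: its derivative is `g' (|z|² + |y'|²) + 2 g Re (z̄ z' + ȳ' y'')`,
and after substituting `z'` and `y''` from the two equations the `iλ` contributions cancel,
leaving `-2 g Re (z̄ g₃' + c₀ ȳ' v + ȳ' g₄)`. Integrating over `[p, q]`, the boundary values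
`g(p) = 1`, `g(q) = -1` turn the left side into the sum of the four traces, and each remaining
integral is bounded by `M_{g'}` or `M_g` times a Cauchy–Schwarz product.
-/

open MeasureTheory Complex Set
open scoped RealInnerProductSpace

lemma Set.EqOn.Icc_of_Ioo {X Y : Type*} [TopologicalSpace X] [LinearOrder X] [OrderTopology X]
    [DenselyOrdered X] [TopologicalSpace Y] [T2Space Y] {a b : X} (hab : a < b) {f g : X → Y}
    (h : EqOn f g (Ioo a b)) (hf : ContinuousOn f (Icc a b)) (hg : ContinuousOn g (Icc a b)) :
    EqOn f g (Icc a b) :=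
  h.of_subset_closure hf hg Ioo_subset_Icc_self (closure_Ioo hab.ne).ge

lemma Complex.inner_I_mul_add_inner_I_mul (lam : ℝ) (a b : ℂ) :
    ⟪a, I * lam * b⟫ + ⟪b, I * lam * a⟫ = 0 := by
  simp only [Complex.inner, mul_re, mul_im, I_re, I_im, ofReal_re, ofReal_im, conj_re, conj_im]
  ring

lemma inner_add_inner_eq_of_resolvent {lam c₀ : ℝ} {z z' y' y'' g₃' v g₄ : ℂ}
    (h₃ : I * lam * y' - z' = g₃') (h₄ : I * lam * z - y'' - c₀ * v = g₄) :
    ⟪z, z'⟫ + ⟪y', y''⟫ = -(⟪g₃', z⟫ + c₀ * ⟪v, y'⟫ + ⟪g₄, y'⟫) := by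
  rw [real_inner_comm z, real_inner_comm y' v, real_inner_comm y' g₄, ← h₃, ← h₄]
  simp only [inner_sub_right, ← real_smul, real_inner_smul_right]
  linear_combination Complex.inner_I_mul_add_inner_I_mul lam z y'

section IntervalIntegral

variable {E F : Type*} [NormedAddCommGroup E] [NormedAddCommGroup F] {a b : ℝ}

lemma ContinuousOn.memLp_restrict_Ioc {f : ℝ → E} (hf : ContinuousOn f (Icc a b))
    (p : ENNReal) : MemLp f p (volume.restrict (Ioc a b)) := by
  have : IsFiniteMeasure (volume.restrict (Ioc a b)) :=
    isFiniteMeasure_restrict.2 measure_Ioc_lt_top.ne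
  obtain ⟨C, hC⟩ := isCompact_Icc.exists_bound_of_continuousOn hf
  refine MemLp.of_bound ((hf.mono Ioc_subset_Icc_self).aestronglyMeasurable measurableSet_Ioc) C ?_
  filter_upwards [ae_restrict_mem measurableSet_Ioc] with x hx
  exact hC x (Ioc_subset_Icc_self hx)

lemma integral_norm_mul_norm_le_sqrt_mul_sqrt_s15 (hab : a ≤ b) {f : ℝ → E} {g : ℝ → F}
    (hf : ContinuousOn f (Icc a b)) (hg : ContinuousOn g (Icc a b)) :
    ∫ x in a..b, ‖f x‖ * ‖g x‖ ≤ √(∫ x in a..b, ‖f x‖ ^ 2) * √(∫ x in a..b, ‖g x‖ ^ 2) := by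
  have holder := integral_mul_le_Lp_mul_Lq_of_nonneg Real.HolderConjugate.two_two
    (.of_forall fun x => norm_nonneg (f x)) (.of_forall fun x => norm_nonneg (g x))
    (hf.memLp_restrict_Ioc _).norm (hg.memLp_restrict_Ioc _).norm
  simp only [Real.rpow_two] at holder
  simpa only [intervalIntegral.integral_of_le hab, Real.sqrt_eq_rpow] using holder

lemma integral_mul_le_of_abs_le {M : ℝ} {m u e : ℝ → ℝ} (hab : a ≤ b)
    (hm : ContinuousOn m (Icc a b)) (hu : ContinuousOn u (Icc a b))
    (he : ContinuousOn e (Icc a b)) (hmM : ∀ x ∈ Icc a b, |m x| ≤ M)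
    (hue : ∀ x ∈ Icc a b, |u x| ≤ e x) :
    ∫ x in a..b, m x * u x ≤ M * ∫ x in a..b, e x := by
  have hM : 0 ≤ M := (abs_nonneg _).trans (hmM a (left_mem_Icc.2 hab))
  rw [← intervalIntegral.integral_const_mul]
  refine intervalIntegral.integral_mono_on hab ((hm.mul hu).intervalIntegrable_of_Icc hab)
    ((continuousOn_const.mul he).intervalIntegrable_of_Icc hab) fun x hx => ?_
  calc m x * u x ≤ |m x| * |u x| := (le_abs_self _).trans (abs_mul _ _).le
    _ ≤ M * e x := mul_le_mul (hmM x hx) (hue x hx) (abs_nonneg _) hM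

end IntervalIntegral

lemma integral_mul_inner_le {F : Type*} [NormedAddCommGroup F] [InnerProductSpace ℝ F]
    {a b M : ℝ} {m : ℝ → ℝ} {f g : ℝ → F} (hab : a ≤ b) (hm : ContinuousOn m (Icc a b))
    (hf : ContinuousOn f (Icc a b)) (hg : ContinuousOn g (Icc a b))
    (hmM : ∀ x ∈ Icc a b, |m x| ≤ M) :
    ∫ x in a..b, m x * ⟪f x, g x⟫ ≤
      M * √(∫ x in a..b, ‖f x‖ ^ 2) * √(∫ x in a..b, ‖g x‖ ^ 2) := by
  have hM : 0 ≤ M := (abs_nonneg _).trans (hmM a (left_mem_Icc.2 hab))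
  rw [mul_assoc]
  calc ∫ x in a..b, m x * ⟪f x, g x⟫ ≤ M * ∫ x in a..b, ‖f x‖ * ‖g x‖ :=
        integral_mul_le_of_abs_le hab hm (hf.inner hg) (hf.norm.mul hg.norm) hmM
          fun x _ => abs_real_inner_le_norm _ _
    _ ≤ _ := mul_le_mul_of_nonneg_left (integral_norm_mul_norm_le_sqrt_mul_sqrt_s15 hab hf hg) hM

theorem stmt_15_general (p q lam c₀ Mg Mg' : ℝ) (hpq : p < q) (hc₀ : 0 < c₀)
    (g g' : ℝ → ℝ)
    (hg : ∀ x ∈ Set.Icc p q, HasDerivAt g (g' x) x)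
    (hg'c : ContinuousOn g' (Set.Icc p q))
    (hgp : g p = 1) (hgq : g q = -1)
    (hMg : IsGreatest ((fun x => |g x|) '' Set.Icc p q) Mg)
    (hMg' : IsGreatest ((fun x => |g' x|) '' Set.Icc p q) Mg')
    (y' y'' z z' g₃' : ℝ → ℂ)
    (hy' : ∀ x ∈ Set.Icc p q, HasDerivAt y' (y'' x) x)
    (hy''c : ContinuousOn y'' (Set.Icc p q))
    (hz : ∀ x ∈ Set.Icc p q, HasDerivAt z (z' x) x)
    (hz'c : ContinuousOn z' (Set.Icc p q))
    (hg₃'c : ContinuousOn g₃' (Set.Icc p q))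
    (v g₄ : ℝ → ℂ)
    (hvc : ContinuousOn v (Set.Icc p q)) (hg₄c : ContinuousOn g₄ (Set.Icc p q))
    (heq3 : ∀ x ∈ Set.Ioo p q, Complex.I * (lam : ℂ) * y' x - z' x = g₃' x)
    (heq4 : ∀ x ∈ Set.Ioo p q,
      Complex.I * (lam : ℂ) * z x - y'' x - (c₀ : ℂ) * v x = g₄ x) :
    ‖z q‖ ^ 2 + ‖z p‖ ^ 2 + ‖y' q‖ ^ 2 + ‖y' p‖ ^ 2 ≤
      Mg' * (∫ x in p..q, (‖z x‖ ^ 2 + ‖y' x‖ ^ 2))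
        + 2 * c₀ * Mg * Real.sqrt (∫ x in p..q, ‖v x‖ ^ 2)
            * Real.sqrt (∫ x in p..q, ‖y' x‖ ^ 2)
        + 2 * Mg * Real.sqrt (∫ x in p..q, ‖g₃' x‖ ^ 2)
            * Real.sqrt (∫ x in p..q, ‖z x‖ ^ 2)
        + 2 * Mg * Real.sqrt (∫ x in p..q, ‖g₄ x‖ ^ 2)
            * Real.sqrt (∫ x in p..q, ‖y' x‖ ^ 2) := by
  have hab := hpq.le
  have hgc : ContinuousOn g (Icc p q) := HasDerivAt.continuousOn hg
  have hzc : ContinuousOn z (Icc p q) := HasDerivAt.continuousOn hz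
  have hy'c : ContinuousOn y' (Icc p q) := HasDerivAt.continuousOn hy'
  have h₃ : EqOn (fun x => I * lam * y' x - z' x) g₃' (Icc p q) :=
    EqOn.Icc_of_Ioo hpq heq3 (by fun_prop) hg₃'c
  have h₄ : EqOn (fun x => I * lam * z x - y'' x - c₀ * v x) g₄ (Icc p q) :=
    EqOn.Icc_of_Ioo hpq heq4 (by fun_prop) hg₄c
  have hderiv : ∀ x ∈ uIcc p q, HasDerivAt (fun t => g t * (‖z t‖ ^ 2 + ‖y' t‖ ^ 2))
      (-(-g' x * (‖z x‖ ^ 2 + ‖y' x‖ ^ 2) + 2 * (g x * ⟪g₃' x, z x⟫)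
        + 2 * c₀ * (g x * ⟪v x, y' x⟫) + 2 * (g x * ⟪g₄ x, y' x⟫))) x := by
    intro x hx
    rw [uIcc_of_le hab] at hx
    refine ((hg x hx).mul ((hz x hx).norm_sq.add (hy' x hx).norm_sq)).congr_deriv ?_
    simp only [Pi.add_apply]
    linear_combination (2 * g x) * inner_add_inner_eq_of_resolvent (h₃ hx) (h₄ hx)
  have hFTC := intervalIntegral.integral_eq_sub_of_hasDerivAt hderiv
    (ContinuousOn.intervalIntegrable (by rw [uIcc_of_le hab]; fun_prop))
  rw [intervalIntegral.integral_neg, intervalIntegral.integral_add, intervalIntegral.integral_add,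
    intervalIntegral.integral_add, intervalIntegral.integral_const_mul,
    intervalIntegral.integral_const_mul, intervalIntegral.integral_const_mul, hgp, hgq] at hFTC
  all_goals try exact ContinuousOn.intervalIntegrable_of_Icc hab (by fun_prop)
  have hbE := integral_mul_le_of_abs_le hab (by fun_prop) (by fun_prop) (by fun_prop)
    (fun x hx => (abs_neg (g' x)).trans_le (hMg'.2 ⟨x, hx, rfl⟩))
    (fun x _ => (abs_of_nonneg (by positivity : 0 ≤ ‖z x‖ ^ 2 + ‖y' x‖ ^ 2)).le)
  have hgM : ∀ x ∈ Icc p q, |g x| ≤ Mg := fun x hx => hMg.2 ⟨x, hx, rfl⟩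
  have hb₃ := integral_mul_inner_le hab hgc hg₃'c hzc hgM
  have hbv := mul_le_mul_of_nonneg_left (integral_mul_inner_le hab hgc hvc hy'c hgM) hc₀.le
  have hb₄ := integral_mul_inner_le hab hgc hg₄c hy'c hgM
  linarith

/-- Combined boundary-trace estimate for `z` and `y′` of the undamped wave component,
from `iλy′ − z′ = g₃′` and `iλz − y″ − c₀v = g₄` on `(p,q)` via the multipliers
`2gz̄` and `2gȳ′`. -/
theorem stmt_15 (p q lam c₀ Mg Mg' : ℝ) (hpq : p < q) (hc₀ : 0 < c₀)
    (g g' : ℝ → ℝ)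
    (hg : ∀ x ∈ Set.Icc p q, HasDerivAt g (g' x) x)
    (hg'c : ContinuousOn g' (Set.Icc p q))
    (hgp : g p = 1) (hgq : g q = -1)
    (hMg : IsGreatest ((fun x => |g x|) '' Set.Icc p q) Mg)
    (hMg' : IsGreatest ((fun x => |g' x|) '' Set.Icc p q) Mg')
    (y y' y'' z z' g₃ g₃' : ℝ → ℂ)
    (hy : ∀ x ∈ Set.Icc p q, HasDerivAt y (y' x) x)
    (hy' : ∀ x ∈ Set.Icc p q, HasDerivAt y' (y'' x) x)
    (hy''c : ContinuousOn y'' (Set.Icc p q))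
    (hz : ∀ x ∈ Set.Icc p q, HasDerivAt z (z' x) x)
    (hz'c : ContinuousOn z' (Set.Icc p q))
    (hg₃ : ∀ x ∈ Set.Icc p q, HasDerivAt g₃ (g₃' x) x)
    (hg₃'c : ContinuousOn g₃' (Set.Icc p q))
    (v g₄ : ℝ → ℂ)
    (hvc : ContinuousOn v (Set.Icc p q)) (hg₄c : ContinuousOn g₄ (Set.Icc p q))
    (heq3 : ∀ x ∈ Set.Ioo p q, Complex.I * (lam : ℂ) * y' x - z' x = g₃' x)
    (heq4 : ∀ x ∈ Set.Ioo p q,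
      Complex.I * (lam : ℂ) * z x - y'' x - (c₀ : ℂ) * v x = g₄ x) :
    ‖z q‖ ^ 2 + ‖z p‖ ^ 2 + ‖y' q‖ ^ 2 + ‖y' p‖ ^ 2 ≤
      Mg' * (∫ x in p..q, (‖z x‖ ^ 2 + ‖y' x‖ ^ 2))
        + 2 * c₀ * Mg * Real.sqrt (∫ x in p..q, ‖v x‖ ^ 2)
            * Real.sqrt (∫ x in p..q, ‖y' x‖ ^ 2)
        + 2 * Mg * Real.sqrt (∫ x in p..q, ‖g₃' x‖ ^ 2)
            * Real.sqrt (∫ x in p..q, ‖z x‖ ^ 2)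
        + 2 * Mg * Real.sqrt (∫ x in p..q, ‖g₄ x‖ ^ 2)
            * Real.sqrt (∫ x in p..q, ‖y' x‖ ^ 2) :=
  stmt_15_general p q lam c₀ Mg Mg' hpq hc₀ g g' hg hg'c hgp hgq hMg hMg' y' y'' z z' g₃' hy' hy''c
    hz hz'c hg₃'c v g₄ hvc hg₄c heq3 heq4
end
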